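/- arXiv:1608.02279 — 7 statements merged into one kernel-verified Lean document; each statement's English description precedes it below -/
import Mathlib

section
/- Let k and r be positive integers with r ≤ k, and let a_1, …, a_r be positive integers with a_1 + ⋯ + a_r = k. Any set partition of [n] having at least r blocks each of size at least k - r + 1 contains the layered partition L_{a_1,…,a_r}. -/
/-- `i` and `j` lie in the same block of the set partition `P` of `[n] = {1, …, n}`. -/
def SameBlock {n : ℕ} (P : Finpartition (Finset.Icc 1 n)) (i j : ℕ) : Prop :=
  ∃ B ∈ P.parts, i ∈ B ∧ j ∈ B

instance {n : ℕ} (P : Finpartition (Finset.Icc 1 n)) (i j : ℕ) : Decidable (SameBlock P i j) :=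
  inferInstanceAs (Decidable (∃ B ∈ P.parts, i ∈ B ∧ j ∈ B))

/-- The set partition `σ` of `[n]` contains the set partition `τ` of `[k]`: there is a
strictly increasing map `f : [k] → [n]` such that `i, j` lie in the same block of `τ`
iff `f i, f j` lie in the same block of `σ`.  Otherwise `σ` avoids `τ`. -/
def SetPartContains {n k : ℕ} (σ : Finpartition (Finset.Icc 1 n))
    (τ : Finpartition (Finset.Icc 1 k)) : Prop :=
  ∃ f : ℕ → ℕ,
    (∀ i ∈ Finset.Icc 1 k, f i ∈ Finset.Icc 1 n) ∧
    (∀ i ∈ Finset.Icc 1 k, ∀ j ∈ Finset.Icc 1 k, i < j → f i < f j) ∧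
    (∀ i ∈ Finset.Icc 1 k, ∀ j ∈ Finset.Icc 1 k,
      (SameBlock τ i j ↔ SameBlock σ (f i) (f j)))

/-- `A n τ` is the number of set partitions of `[n]` avoiding `τ`. -/
noncomputable def A (n : ℕ) {k : ℕ} (τ : Finpartition (Finset.Icc 1 k)) : ℕ :=
  Nat.card {σ : Finpartition (Finset.Icc 1 n) // ¬ SetPartContains σ τ}

/-- `τ` is the layered partition `L_{a 0, …, a (r-1)}` of `[k]`, whose blocks are the
consecutive intervals `{1, …, a 0}, {a 0 + 1, …, a 0 + a 1}, …` of lengths `a 0, …, a (r-1)`. -/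
def IsLayered {k : ℕ} (r : ℕ) (a : ℕ → ℕ) (τ : Finpartition (Finset.Icc 1 k)) : Prop :=
  τ.parts = (Finset.range r).image
    (fun j => Finset.Icc ((∑ i ∈ Finset.range j, a i) + 1) (∑ i ∈ Finset.range (j + 1), a i))

/-- A uniform set partition of `[n]` with block size `m`: it consists of `n/m` blocks each of
size `m`, and for every `0 ≤ j < m` the interval `S_j = {j·(n/m)+1, …, (j+1)·(n/m)}` contains
exactly one element from each block. -/
def IsUniform (n m : ℕ) (σ : Finpartition (Finset.Icc 1 n)) : Prop :=
  σ.parts.card = n / m ∧ (∀ B ∈ σ.parts, B.card = m) ∧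
    ∀ j < m, ∀ B ∈ σ.parts,
      (Finset.Icc (j * (n / m) + 1) ((j + 1) * (n / m)) ∩ B).card = 1

/-- `P` is the permutation partition of `[2m]` associated to the permutation `π` of `[m]`:
its blocks are `{i, m + π i}` for `i ∈ [m]` (with `Fin m` representing `[m]` via `i ↦ i + 1`). -/
def IsPermPartition (m : ℕ) (π : Equiv.Perm (Fin m))
    (P : Finpartition (Finset.Icc 1 (2 * m))) : Prop :=
  P.parts = Finset.univ.image
    (fun i : Fin m => ({(i : ℕ) + 1, m + (π i : ℕ) + 1} : Finset ℕ))


/-!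
Pick `r` blocks of size at least `k - r + 1` and build the copy of `L_{a_1,…,a_r}` from the
right. Let `x` be the largest threshold such that some block still has `a_r` elements in
`[x, n]`. By maximality each such block contains `x`, so the block `C` is unique and every other
chosen block has at most `a_r - 1` elements in `[x, n]`. Take `a_r` elements of `C` there as the
last layer; the remaining `r - 1` blocks keep at least `(k - a_r) - (r - 1) + 1` elements
below `x`, which is the same situation for `L_{a_1,…,a_{r-1}}`.
-/

open Finset

lemma Nat.nth_mem_finset {S : Finset ℕ} {p : ℕ} (hp : p < #S) : Nat.nth (· ∈ S) p ∈ S :=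
  Nat.nth_mem p fun _ => by simpa using hp

lemma Nat.nth_lt_nth_finset {S : Finset ℕ} {p q : ℕ} (hpq : p < q) (hq : q < #S) :
    Nat.nth (· ∈ S) p < Nat.nth (· ∈ S) q :=
  Nat.nth_lt_nth' hpq fun _ => by simpa using hq

lemma sameBlock_iff_eq {n : ℕ} {P : Finpartition (Icc 1 n)} {B B' : Finset ℕ} {x y : ℕ}
    (hB : B ∈ P.parts) (hB' : B' ∈ P.parts) (hx : x ∈ B) (hy : y ∈ B') :
    SameBlock P x y ↔ B = B' := by
  constructor
  · rintro ⟨D, hD, hxD, hyD⟩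
    rw [P.eq_of_mem_parts hB hD hx hxD, P.eq_of_mem_parts hB' hD hy hyD]
  · rintro rfl
    exact ⟨B, hB, hx, hy⟩

section layerIndex

variable {c : ℕ → ℕ} {r i t : ℕ}

/-- For `c j = a 0 + ⋯ + a (j-1)`, the index `j < r` of the layer `{c j + 1, …, c (j+1)}` of
`L_{a 0, …, a (r-1)}` containing `i`. -/
def layerIndex (c : ℕ → ℕ) (r i : ℕ) : ℕ :=
  Nat.findGreatest (fun j => c j < i) r

lemma layerIndex_spec (hc₀ : c 0 = 0) (hi : 0 < i) (hir : i ≤ c r) :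
    layerIndex c r i < r ∧ c (layerIndex c r i) < i ∧ i ≤ c (layerIndex c r i + 1) := by
  have hlt : c (layerIndex c r i) < i :=
    Nat.findGreatest_spec (P := fun j => c j < i) (Nat.zero_le r) (by rwa [hc₀])
  have hne : layerIndex c r i ≠ r := fun h => by rw [h] at hlt; omega
  have hle := Nat.findGreatest_le (P := fun j => c j < i) r
  refine ⟨lt_of_le_of_ne hle hne, hlt, not_lt.mp fun h => ?_⟩
  exact Nat.findGreatest_is_greatest (lt_add_one _) (lt_of_le_of_ne hle hne) h

lemma layerIndex_eq (hc : Monotone c) (ht : t < r) (hti : c t < i) (hit : i ≤ c (t + 1)) :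
    layerIndex c r i = t := by
  refine Nat.findGreatest_eq_iff.mpr ⟨ht.le, fun _ => hti, fun m htm _ hm => ?_⟩
  exact absurd (hit.trans (hc htm)) (not_le.mpr hm)

lemma layerIndex_mono (c : ℕ → ℕ) (r : ℕ) : Monotone (layerIndex c r) :=
  fun _ _ h => Nat.findGreatest_mono_left (fun _ hj => hj.trans_le h) r

end layerIndex

lemma IsLayered.sameBlock_iff {k r : ℕ} {a : ℕ → ℕ} {τ : Finpartition (Icc 1 k)}
    (hτ : IsLayered r a τ) (hk : ∑ t ∈ range r, a t = k) {i j : ℕ} (hi : i ∈ Icc 1 k)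
    (hj : j ∈ Icc 1 k) :
    SameBlock τ i j ↔
      layerIndex (fun t => ∑ s ∈ range t, a s) r i =
        layerIndex (fun t => ∑ s ∈ range t, a s) r j := by
  set c := fun t => ∑ s ∈ range t, a s
  have hc : Monotone c := monotone_nat_of_le_succ fun t => by simp [c, sum_range_succ]
  rw [mem_Icc] at hi hj
  obtain ⟨hir, hi₁, hi₂⟩ := layerIndex_spec (c := c) (sum_range_zero a) hi.1 (hk ▸ hi.2)
  obtain ⟨hjr, hj₁, hj₂⟩ := layerIndex_spec (c := c) (sum_range_zero a) hj.1 (hk ▸ hj.2)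
  unfold SameBlock
  rw [hτ]
  simp only [exists_mem_image, mem_range, mem_Icc]
  constructor
  · rintro ⟨t, ht, hit, hjt⟩
    rw [layerIndex_eq hc ht hit.1 hit.2, layerIndex_eq hc ht hjt.1 hjt.2]
  · intro hij
    exact ⟨_, hir, ⟨hi₁, hi₂⟩, by rw [hij]; exact ⟨hj₁, hj₂⟩⟩

lemma exists_threshold_unique_block {𝒞 : Finset (Finset ℕ)}
    (h𝒞 : (𝒞 : Set (Finset ℕ)).PairwiseDisjoint id) {m N : ℕ} (hm : 0 < m) {C₀ : Finset ℕ}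
    (hC₀ : C₀ ∈ 𝒞) (hmC₀ : m ≤ #(C₀ ∩ range N)) :
    ∃ x < N, ∃ C ∈ 𝒞, m ≤ #(C ∩ Ico x N) ∧ ∀ D ∈ 𝒞, m ≤ #(D ∩ Ico x N) → D = C := by
  classical
  set P : ℕ → Prop := fun t => ∃ C ∈ 𝒞, m ≤ #(C ∩ Ico t N)
  set x := Nat.findGreatest P N
  have hlt : ∀ D : Finset ℕ, m ≤ #(D ∩ Ico x N) → x < N := fun D hD => by
    obtain ⟨y, hy⟩ := card_pos.mp (hm.trans_le hD)
    have := (mem_Ico.mp (mem_inter.mp hy).2)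
    omega
  have hx_mem : ∀ D ∈ 𝒞, m ≤ #(D ∩ Ico x N) → x ∈ D := by
    intro D hD hmD
    have hfew : #(D ∩ Ico (x + 1) N) < m := not_le.mp fun h =>
      Nat.findGreatest_is_greatest (lt_add_one x) (hlt D hmD) ⟨D, hD, h⟩
    by_contra hxD
    have : D ∩ Ico x N = D ∩ Ico (x + 1) N := by
      ext y
      simp only [mem_inter, mem_Ico, and_congr_right_iff]
      intro hy
      have : y ≠ x := fun h => hxD (h ▸ hy)
      omega
    rw [this] at hmD
    omega
  obtain ⟨C, hC, hmC⟩ : P x :=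
    Nat.findGreatest_spec (Nat.zero_le N) ⟨C₀, hC₀, by rwa [← range_eq_Ico]⟩
  refine ⟨x, hlt C hmC, C, hC, hmC, fun D hD hmD => ?_⟩
  exact h𝒞.elim hD hC (not_disjoint_iff.mpr ⟨x, hx_mem D hD hmD, hx_mem C hC hmC⟩)

structure IsLayering (𝒞 : Finset (Finset ℕ)) (r : ℕ) (a : ℕ → ℕ) (S g : ℕ → Finset ℕ) :
    Prop where
  block_mem : ∀ j < r, g j ∈ 𝒞
  subset_block : ∀ j < r, S j ⊆ g j
  card_eq : ∀ j < r, #(S j) = a j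
  lt_of_lt : ∀ i j, i < j → j < r → ∀ x ∈ S i, ∀ y ∈ S j, x < y
  block_injOn : ∀ i < r, ∀ j < r, g i = g j → i = j

namespace IsLayering

variable {𝒞 : Finset (Finset ℕ)} {r : ℕ} {a : ℕ → ℕ} {S g : ℕ → Finset ℕ}

lemma mono {𝒟 : Finset (Finset ℕ)} (h : IsLayering 𝒞 r a S g) (h𝒞𝒟 : 𝒞 ⊆ 𝒟) :
    IsLayering 𝒟 r a S g :=
  { h with block_mem := fun j hj => h𝒞𝒟 (h.block_mem j hj) }

lemma snoc {C T : Finset ℕ} (h : IsLayering (𝒞.erase C) r a S g) (hC : C ∈ 𝒞) (hTC : T ⊆ C)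
    (hT : #T = a r) (hST : ∀ j < r, ∀ x ∈ S j, ∀ y ∈ T, x < y) :
    IsLayering 𝒞 (r + 1) a (Function.update S r T) (Function.update g r C) := by
  have hcases : ∀ j < r + 1, j < r ∨ j = r := fun j hj => by omega
  have hg_ne : ∀ j < r, g j ≠ C := fun j hj => (mem_erase.mp (h.block_mem j hj)).1
  refine ⟨fun j hj => ?_, fun j hj => ?_, fun j hj => ?_, fun i j hij hj => ?_,
    fun i hi j hj => ?_⟩
  · rcases hcases j hj with hj | rfl
    · simpa [hj.ne] using mem_of_mem_erase (h.block_mem j hj)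
    · simpa using hC
  · rcases hcases j hj with hj | rfl
    · simpa [hj.ne] using h.subset_block j hj
    · simpa using hTC
  · rcases hcases j hj with hj | rfl
    · simpa [hj.ne] using h.card_eq j hj
    · simpa using hT
  · rcases hcases j hj with hj | rfl
    · simpa [hij.ne, hj.ne, (hij.trans hj).ne] using h.lt_of_lt i j hij hj
    · simpa [hij.ne] using hST i hij
  · rcases hcases i hi with hi | rfl <;> rcases hcases j hj with hj | rfl
    · simpa [hi.ne, hj.ne] using h.block_injOn i hi j hj
    · simpa [hi.ne] using hg_ne i hi
    · simpa [hj.ne, hj.ne'] using (hg_ne j hj).symm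
    · simp

end IsLayering

theorem exists_isLayering (a : ℕ → ℕ) (r : ℕ) (ha : ∀ j < r, 0 < a j) :
    ∀ (N : ℕ) (𝒞 : Finset (Finset ℕ)), #𝒞 = r → (𝒞 : Set (Finset ℕ)).PairwiseDisjoint id →
      (∀ C ∈ 𝒞, ∑ j ∈ range r, a j < r + #(C ∩ range N)) →
      ∃ S g, IsLayering 𝒞 r a S g ∧ ∀ j < r, ∀ y ∈ S j, y < N := by
  induction r with
  | zero =>
    intro N 𝒞 _ _ _
    exact ⟨fun _ => ∅, fun _ => ∅, ⟨by simp, by simp, by simp, by simp, by simp⟩, by simp⟩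
  | succ r ih =>
    intro N 𝒞 h𝒞card h𝒞 hbig
    have hr : r ≤ ∑ j ∈ range r, a j := by
      simpa using card_nsmul_le_sum (range r) a 1 fun j hj => ha j (by simp at hj; omega)
    obtain ⟨C₀, hC₀⟩ := card_pos.mp (by rw [h𝒞card]; exact r.succ_pos)
    have hC₀big := hbig C₀ hC₀
    rw [sum_range_succ] at hC₀big
    obtain ⟨x, hxN, C, hC, hCx, hCuniq⟩ :=
      exists_threshold_unique_block (N := N) h𝒞 (ha r r.lt_succ_self) hC₀ (by omega)
    obtain ⟨T, hTC, hT⟩ := exists_subset_card_eq hCx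
    -- `D` has fewer than `a r` elements in `[x, N)`, so it keeps enough of them below `x`.
    have hbig' : ∀ D ∈ 𝒞.erase C, ∑ j ∈ range r, a j < r + #(D ∩ range x) := by
      intro D hD
      obtain ⟨hDC, hD𝒞⟩ := mem_erase.mp hD
      have hfew : #(D ∩ Ico x N) < a r := not_le.mp fun h => hDC (hCuniq D hD𝒞 h)
      have hsplit : D ∩ range N ⊆ D ∩ range x ∪ D ∩ Ico x N := by
        intro y hy
        simp only [mem_inter, mem_union, mem_range, mem_Ico] at hy ⊢
        rcases lt_or_ge y x with h | h <;> simp [*]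
      have := (card_le_card hsplit).trans (card_union_le _ _)
      have := hbig D hD𝒞
      rw [sum_range_succ] at this
      omega
    obtain ⟨S, g, hSg, hSx⟩ := ih (fun j hj => ha j (by omega)) x (𝒞.erase C)
      (by rw [card_erase_of_mem hC, h𝒞card]; rfl) (h𝒞.subset (by simp)) hbig'
    have hTx : ∀ y ∈ T, x ≤ y ∧ y < N := fun y hy => mem_Ico.mp (mem_inter.mp (hTC hy)).2
    refine ⟨_, _, hSg.snoc hC (hTC.trans inter_subset_left) hT
      fun j hj y hy z hz => (hSx j hj y hy).trans_le (hTx z hz).1, fun j hj y hy => ?_⟩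
    rcases Nat.lt_succ_iff_lt_or_eq.mp hj with hj | rfl
    · simp only [Function.update_of_ne hj.ne] at hy
      exact (hSx j hj y hy).trans hxN
    · simp only [Function.update_self] at hy
      exact (hTx y hy).2

/-- The embedding sends the `p`-th element of the layer `j` of `L_{a 0, …, a (r-1)}` to the
`p`-th smallest element of `S j`. -/
theorem IsLayering.setPartContains {n k r : ℕ} {a : ℕ → ℕ} {S g : ℕ → Finset ℕ}
    {σ : Finpartition (Icc 1 n)} {τ : Finpartition (Icc 1 k)} (hτ : IsLayered r a τ)
    (hk : ∑ t ∈ range r, a t = k) (h : IsLayering σ.parts r a S g) :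
    SetPartContains σ τ := by
  set c := fun t => ∑ s ∈ range t, a s
  set lay := layerIndex c r
  have hspec : ∀ i ∈ Icc 1 k, lay i < r ∧ c (lay i) < i ∧ i ≤ c (lay i + 1) := fun i hi =>
    layerIndex_spec (sum_range_zero a) (mem_Icc.mp hi).1 ((mem_Icc.mp hi).2.trans hk.ge)
  have hpos : ∀ i ∈ Icc 1 k, i - c (lay i) - 1 < #(S (lay i)) := fun i hi => by
    obtain ⟨hr, hi₁, hi₂⟩ := hspec i hi
    rw [h.card_eq _ hr]
    have : c (lay i + 1) = c (lay i) + a (lay i) := sum_range_succ a (lay i)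
    omega
  set f := fun i => Nat.nth (· ∈ S (lay i)) (i - c (lay i) - 1)
  have hf_mem : ∀ i ∈ Icc 1 k, f i ∈ g (lay i) := fun i hi =>
    h.subset_block _ (hspec i hi).1 (Nat.nth_mem_finset (hpos i hi))
  refine ⟨f, fun i hi => σ.le (h.block_mem _ (hspec i hi).1) (hf_mem i hi),
    fun i hi j hj hij => ?_, fun i hi j hj => ?_⟩
  · rcases (show lay i ≤ lay j from layerIndex_mono c r hij.le).eq_or_lt with hlay | hlay
    · have hj' := hpos j hj
      rw [← hlay] at hj'
      simp only [f, ← hlay]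
      refine Nat.nth_lt_nth_finset ?_ hj'
      have := (hspec i hi).2.1
      omega
    · exact h.lt_of_lt _ _ hlay (hspec j hj).1 _ (Nat.nth_mem_finset (hpos i hi)) _
        (Nat.nth_mem_finset (hpos j hj))
  · rw [hτ.sameBlock_iff hk hi hj, sameBlock_iff_eq (h.block_mem _ (hspec i hi).1)
      (h.block_mem _ (hspec j hj).1) (hf_mem i hi) (hf_mem j hj)]
    exact ⟨congrArg g, h.block_injOn _ (hspec i hi).1 _ (hspec j hj).1⟩

theorem big_blocks_contain_layered_general (k r : ℕ) (a : ℕ → ℕ)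
    (ha : ∀ i < r, 0 < a i) (hsum : ∑ i ∈ Finset.range r, a i = k)
    (τ : Finpartition (Finset.Icc 1 k)) (hτ : IsLayered r a τ)
    (n : ℕ) (σ : Finpartition (Finset.Icc 1 n))
    (hσ : r ≤ (σ.parts.filter fun B => k - r + 1 ≤ B.card).card) :
    SetPartContains σ τ := by
  obtain ⟨𝒞, h𝒞σ, h𝒞card⟩ := exists_subset_card_eq hσ
  have h𝒞parts : 𝒞 ⊆ σ.parts := h𝒞σ.trans (filter_subset _ _)
  have hbig : ∀ C ∈ 𝒞, ∑ j ∈ range r, a j < r + #(C ∩ range (n + 1)) := by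
    intro C hC
    have hCn : C ∩ range (n + 1) = C := inter_eq_left.mpr fun y hy => by
      have := mem_Icc.mp (σ.le (h𝒞parts hC) hy)
      exact mem_range.mpr (by omega)
    have := (mem_filter.mp (h𝒞σ hC)).2
    rw [hCn, hsum]
    omega
  obtain ⟨S, g, hSg, -⟩ :=
    exists_isLayering a r ha (n + 1) 𝒞 h𝒞card (σ.disjoint.subset h𝒞parts) hbig
  exact (hSg.mono h𝒞parts).setPartContains hτ hsum

/-- Any set partition of `[n]` with at least `r` blocks of size at least
`k - r + 1` contains the layered partition `L_{a_1,…,a_r}` of `[k]`. -/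
theorem big_blocks_contain_layered (k r : ℕ) (hr : 0 < r) (hrk : r ≤ k) (a : ℕ → ℕ)
    (ha : ∀ i < r, 0 < a i) (hsum : ∑ i ∈ Finset.range r, a i = k)
    (τ : Finpartition (Finset.Icc 1 k)) (hτ : IsLayered r a τ)
    (n : ℕ) (σ : Finpartition (Finset.Icc 1 n))
    (hσ : r ≤ (σ.parts.filter fun B => k - r + 1 ≤ B.card).card) :
    SetPartContains σ τ :=
  big_blocks_contain_layered_general k r a ha hsum τ hτ n σ hσ
end

section
/- Let k and r be positive integers with r < k and let n be a positive integer. The number of set partitions of [n] having at most r - 1 blocks of size at least k - r + 1 is at most ((k+1)/2)^(2n) · n^(n(1 - 1/(k-r))). -/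
/-!
Each element `x` of a partition of `[n]` gets a label in `Fin (r - 1) ⊕ Bool`: the index of its
block if that block is large (size `> t := k - r`, at most `r - 1` such blocks), and otherwise
whether `x` is the chosen representative of its small block. Together with a pointer from every
non-representative element of a small block to its representative, the labels determine the
partition. A small block `B` has `#B - 1 ≤ (1 - 1/t) #B` such elements, so there are at most
`(r + 1)^n · n^((1 - 1/t) n)` partitions, and `r + 1 ≤ k ≤ ((k + 1) / 2)^2`.
-/

open Finset

section PointerCodes

variable {X ι : Type*} [Fintype X] [DecidableEq X] [DecidableEq ι]

def pointerShape (c : X → ι ⊕ X) (x : X) : ι ⊕ Bool := (c x).map id (· = x)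

def movedPoints (c : X → ι ⊕ X) : Finset X := {x | pointerShape c x = .inr false}

theorem mem_movedPoints {c : X → ι ⊕ X} {x : X} :
    x ∈ movedPoints c ↔ ∃ y ≠ x, c x = .inr y := by
  rw [movedPoints, mem_filter_univ, pointerShape]
  rcases c x with i | y <;> simp

theorem movedPoints_eq_of_pointerShape_eq {c c' : X → ι ⊕ X}
    (h : pointerShape c = pointerShape c') : movedPoints c = movedPoints c' := by
  simp [movedPoints, h]

theorem eq_of_pointerShape_eq {c c' : X → ι ⊕ X} (hshape : pointerShape c = pointerShape c')
    (hmoved : ∀ x ∈ movedPoints c, c x = c' x) : c = c' := by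
  funext x
  by_cases hx : x ∈ movedPoints c
  · exact hmoved x hx
  have hx' := congrFun hshape x
  rcases hc : c x with i | y <;> rcases hc' : c' x with j | y' <;>
    simp_all [pointerShape, mem_movedPoints]

variable [Fintype ι]

theorem card_pointerShape_fiber_le (c₀ : X → ι ⊕ X) :
    #{c | pointerShape c = pointerShape c₀} ≤ Fintype.card X ^ #(movedPoints c₀) := by
  let target (c : X → ι ⊕ X) (x : movedPoints c₀) : X := (c x).elim (fun _ => x) id
  calc #{c | pointerShape c = pointerShape c₀}
      ≤ #(univ : Finset (movedPoints c₀ → X)) := by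
        refine card_le_card_of_injOn target (fun _ _ => mem_univ _) ?_
        intro c hc c' hc' htarget
        simp only [coe_filter, mem_univ, true_and, Set.mem_ofPred_eq] at hc hc'
        refine eq_of_pointerShape_eq (hc.trans hc'.symm) fun x hx => ?_
        have hx₀ : x ∈ movedPoints c₀ := movedPoints_eq_of_pointerShape_eq hc ▸ hx
        have hx' : x ∈ movedPoints c' := movedPoints_eq_of_pointerShape_eq hc'.symm ▸ hx₀
        obtain ⟨y, -, hy⟩ := mem_movedPoints.1 hx
        obtain ⟨y', -, hy'⟩ := mem_movedPoints.1 hx'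
        have := congrFun htarget ⟨x, hx₀⟩
        simp only [target, hy, hy', Sum.elim_inr, id] at this
        rw [hy, hy', this]
    _ = Fintype.card X ^ #(movedPoints c₀) := by simp

theorem card_movedPoints_le [Nonempty X] (M : ℕ) :
    #{c : X → ι ⊕ X | #(movedPoints c) ≤ M} ≤
      (Fintype.card ι + 2) ^ Fintype.card X * Fintype.card X ^ M := by
  have hfiber : ∀ ℓ ∈ (univ : Finset (X → ι ⊕ Bool)),
      #{c ∈ {c : X → ι ⊕ X | #(movedPoints c) ≤ M} | pointerShape c = ℓ} ≤
        Fintype.card X ^ M := by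
    intro ℓ _
    rcases eq_empty_or_nonempty {c ∈ {c : X → ι ⊕ X | #(movedPoints c) ≤ M} | pointerShape c = ℓ}
      with hempty | ⟨c₀, hc₀⟩
    · simp [hempty]
    simp only [mem_filter, mem_univ, true_and] at hc₀
    obtain ⟨hM, rfl⟩ := hc₀
    calc _ ≤ #{c | pointerShape c = pointerShape c₀} := card_le_card fun c => by simp
      _ ≤ Fintype.card X ^ #(movedPoints c₀) := card_pointerShape_fiber_le c₀
      _ ≤ Fintype.card X ^ M := Nat.pow_le_pow_right Fintype.card_pos hM
  calc _ ≤ Fintype.card X ^ M * #(univ : Finset (X → ι ⊕ Bool)) :=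
        card_le_mul_card_image_of_maps_to (fun _ _ => mem_univ _) _ hfiber
    _ = _ := by simp [mul_comm]

end PointerCodes

namespace Finpartition

variable {α ι : Type*} [DecidableEq α] {s : Finset α}

theorem ext_part {P Q : Finpartition s} (h : ∀ x ∈ s, P.part x = Q.part x) : P = Q := by
  ext B
  constructor
  · intro hB
    obtain ⟨x, hx, rfl⟩ := P.part_surjOn hB
    simpa [h x hx] using hx
  · intro hB
    obtain ⟨x, hx, rfl⟩ := Q.part_surjOn hB
    simpa [← h x hx] using hx

variable (P : Finpartition s) (t : ℕ)

def largeParts : Finset (Finset α) := {B ∈ P.parts | t < #B}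

noncomputable def rep (x : s) : s :=
  ⟨(P.part_nonempty.2 x.2).choose, P.part_subset _ (P.part_nonempty.2 x.2).choose_spec⟩

theorem rep_mem_part (x : s) : (P.rep x : α) ∈ P.part x :=
  (P.part_nonempty.2 x.2).choose_spec

theorem rep_eq_rep_iff {x y : s} : P.rep x = P.rep y ↔ P.part x = P.part y := by
  constructor
  · intro h
    have hx : (P.rep y : α) ∈ P.part x := h ▸ P.rep_mem_part x
    exact (P.part_eq_of_mem (P.part_mem.2 x.2) hx).symm.trans
      (P.part_eq_of_mem (P.part_mem.2 y.2) (P.rep_mem_part y))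
  · intro h
    have hchoose : ∀ {B B' : Finset α} (hB : B.Nonempty) (hB' : B'.Nonempty), B = B' →
        hB.choose = hB'.choose := by
      rintro _ _ _ _ rfl
      rfl
    exact Subtype.ext (hchoose _ _ h)

variable {t} in
theorem part_mem_largeParts {x : s} (hx : t < #(P.part x)) : P.part x ∈ P.largeParts t :=
  mem_filter.2 ⟨P.part_mem.2 x.2, hx⟩

noncomputable def code (e : P.largeParts t ↪ ι) (x : s) : ι ⊕ s :=
  if hx : t < #(P.part x) then .inl (e ⟨P.part x, P.part_mem_largeParts hx⟩) else .inr (P.rep x)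

theorem code_eq_code_iff (e : P.largeParts t ↪ ι) {x y : s} :
    P.code t e x = P.code t e y ↔ P.part x = P.part y := by
  by_cases hx : t < #(P.part x) <;> by_cases hy : t < #(P.part y) <;>
    simp only [code, hx, hy, dite_true, dite_false, Sum.inl.injEq, Sum.inr.injEq, reduceCtorEq,
      e.injective.eq_iff, Subtype.mk.injEq, rep_eq_rep_iff, false_iff]
  · exact fun h => hy (h ▸ hx)
  · exact fun h => hx (h ▸ hy)

theorem eq_of_code_eq {Q : Finpartition s} {e : P.largeParts t ↪ ι} {e' : Q.largeParts t ↪ ι}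
    (h : P.code t e = Q.code t e') : P = Q := by
  refine ext_part fun x hx => ?_
  ext y
  by_cases hy : y ∈ s
  · rw [P.mem_part_iff_part_eq_part hy hx, Q.mem_part_iff_part_eq_part hy hx,
      ← code_eq_code_iff (x := ⟨y, hy⟩) (y := ⟨x, hx⟩) P t e,
      ← code_eq_code_iff (x := ⟨y, hy⟩) (y := ⟨x, hx⟩) Q t e', h]
  · exact iff_of_false (fun h => hy (P.part_subset _ h)) (fun h => hy (Q.part_subset _ h))

variable [DecidableEq ι]

theorem mem_movedPoints_code {e : P.largeParts t ↪ ι} {x : s} :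
    x ∈ movedPoints (P.code t e) ↔ ¬ t < #(P.part x) ∧ P.rep x ≠ x := by
  rw [mem_movedPoints]
  by_cases hx : t < #(P.part x) <;> simp [code, hx]

variable {t} in
theorem card_filter_part_eq_movedPoints_code_mul_le (e : P.largeParts t ↪ ι) (B : Finset α) :
    #((movedPoints (P.code t e)).filter fun x : s => P.part x = B) * t ≤ (t - 1) * #B := by
  rcases eq_empty_or_nonempty ((movedPoints (P.code t e)).filter fun x : s => P.part x = B)
    with hempty | ⟨x₀, hx₀⟩
  · simp [hempty]
  rw [mem_filter, mem_movedPoints_code] at hx₀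
  obtain ⟨⟨hsmall, -⟩, rfl⟩ := hx₀
  have hfiber : #((movedPoints (P.code t e)).filter fun x : s => P.part x = P.part x₀) ≤
      #(P.part x₀) - 1 := by
    rw [← card_erase_of_mem (P.rep_mem_part x₀)]
    refine card_le_card_of_injOn Subtype.val (fun x hx => ?_) Subtype.val_injective.injOn
    simp only [coe_filter, mem_movedPoints_code, Set.mem_ofPred_eq] at hx
    obtain ⟨⟨-, hrep⟩, hpart⟩ := hx
    rw [← (P.rep_eq_rep_iff).2 hpart, ← hpart]
    exact mem_erase.2 ⟨fun h => hrep (Subtype.ext h).symm, P.mem_part x.2⟩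
  calc _ ≤ (#(P.part x₀) - 1) * t := Nat.mul_le_mul_right t hfiber
    _ = #(P.part x₀) * t - t := Nat.sub_one_mul _ _
    _ ≤ t * #(P.part x₀) - #(P.part x₀) := by
      rw [mul_comm]; exact Nat.sub_le_sub_left (not_lt.1 hsmall) _
    _ = (t - 1) * #(P.part x₀) := (Nat.sub_one_mul _ _).symm

theorem card_movedPoints_code_mul_le (e : P.largeParts t ↪ ι) :
    #(movedPoints (P.code t e)) * t ≤ (t - 1) * #s := by
  calc #(movedPoints (P.code t e)) * t
      = ∑ B ∈ P.parts, #((movedPoints (P.code t e)).filter fun x : s => P.part x = B) * t := by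
        rw [card_eq_sum_card_fiberwise (fun x _ => P.part_mem.2 x.2), sum_mul]
    _ ≤ ∑ B ∈ P.parts, (t - 1) * #B :=
        sum_le_sum fun B _ => P.card_filter_part_eq_movedPoints_code_mul_le e B
    _ = (t - 1) * #s := by rw [← mul_sum, P.sum_card_parts]

noncomputable def largePartsEmbedding {m : ℕ} (h : #(P.largeParts t) ≤ m) :
    P.largeParts t ↪ Fin m :=
  (P.largeParts t).equivFin.toEmbedding.trans (Fin.castLEEmb h)

end Finpartition

open Finpartition in
theorem card_finpartition_card_largeParts_le {α : Type*} [DecidableEq α] {s : Finset α}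
    (hs : s.Nonempty) {t : ℕ} (ht : 0 < t) (m : ℕ) :
    Fintype.card {P : Finpartition s // #(P.largeParts t) ≤ m} ≤
      (m + 2) ^ #s * #s ^ ((t - 1) * #s / t) := by
  have : Nonempty s := hs.to_subtype
  let encode (P : {P : Finpartition s // #(P.largeParts t) ≤ m}) : s → Fin m ⊕ s :=
    P.1.code t (P.1.largePartsEmbedding t P.2)
  have hencode : Function.Injective encode := fun P Q h => Subtype.ext (eq_of_code_eq _ _ h)
  calc Fintype.card {P : Finpartition s // #(P.largeParts t) ≤ m}
      ≤ #{c : s → Fin m ⊕ s | #(movedPoints c) ≤ (t - 1) * #s / t} := by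
        rw [← card_univ]
        refine card_le_card_of_injOn encode (fun P _ => ?_) hencode.injOn
        simpa [Nat.le_div_iff_mul_le ht] using P.1.card_movedPoints_code_mul_le t _
    _ ≤ (m + 2) ^ #s * #s ^ ((t - 1) * #s / t) := by
        simpa using card_movedPoints_le (X := s) (ι := Fin m) ((t - 1) * #s / t)

theorem le_add_one_div_two_sq (x : ℝ) : x ≤ ((x + 1) / 2) ^ 2 := by
  nlinarith [sq_nonneg (x - 1)]

theorem natCast_pow_le_rpow_of_mul_le {n M t : ℕ} (hn : 0 < n) (ht : 0 < t)
    (hM : M * t ≤ (t - 1) * n) : (n : ℝ) ^ M ≤ (n : ℝ) ^ ((n : ℝ) * (1 - 1 / (t : ℝ))) := by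
  rw [← Real.rpow_natCast]
  refine Real.rpow_le_rpow_of_exponent_le (by exact_mod_cast hn) ?_
  have ht' : (0 : ℝ) < t := by exact_mod_cast ht
  have hM' : ((M * t : ℕ) : ℝ) ≤ ((t - 1) * n : ℕ) := by exact_mod_cast hM
  push_cast [Nat.cast_sub ht] at hM'
  have hexp : (n : ℝ) * (1 - 1 / t) = (t - 1) * n / t := by field_simp
  rw [hexp, le_div_iff₀ ht']
  exact hM'

/-- The number of set partitions of `[n]` with at most `r - 1` blocks of size
at least `k - r + 1` is at most `((k+1)/2)^(2n) · n^(n(1 - 1/(k-r)))`. -/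
theorem few_big_blocks_bound (k r n : ℕ) (hr : 0 < r) (hrk : r < k) (hn : 0 < n) :
    (Nat.card {σ : Finpartition (Finset.Icc 1 n) //
        (σ.parts.filter fun B => k - r + 1 ≤ B.card).card ≤ r - 1} : ℝ) ≤
      (((k : ℝ) + 1) / 2) ^ (2 * n) * (n : ℝ) ^ ((n : ℝ) * (1 - 1 / ((k : ℝ) - r))) := by
  set M := (k - r - 1) * n / (k - r)
  have hcount : Nat.card {σ : Finpartition (Finset.Icc 1 n) //
      (σ.parts.filter fun B => k - r + 1 ≤ B.card).card ≤ r - 1} ≤ (r + 1) ^ n * n ^ M := by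
    have := card_finpartition_card_largeParts_le (Finset.nonempty_Icc.2 (Nat.succ_le_of_lt hn))
      (t := k - r) (by omega) (r - 1)
    rw [Nat.card_Icc, Nat.add_sub_cancel] at this
    rw [Nat.card_eq_fintype_card, show r + 1 = r - 1 + 2 by omega]
    exact this
  have hlabels : ((r : ℝ) + 1) ^ n ≤ (((k : ℝ) + 1) / 2) ^ (2 * n) := by
    rw [pow_mul]
    refine pow_le_pow_left₀ (by positivity) ?_ n
    have hk : (r : ℝ) + 1 ≤ k := by exact_mod_cast hrk
    exact hk.trans (le_add_one_div_two_sq k)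
  have hpointers : (n : ℝ) ^ M ≤ (n : ℝ) ^ ((n : ℝ) * (1 - 1 / ((k : ℝ) - r))) := by
    simpa [Nat.cast_sub hrk.le] using
      natCast_pow_le_rpow_of_mul_le hn (t := k - r) (by omega) (Nat.div_mul_le_self _ _)
  calc _ ≤ (((r + 1) ^ n * n ^ M : ℕ) : ℝ) := by exact_mod_cast hcount
    _ = ((r : ℝ) + 1) ^ n * (n : ℝ) ^ M := by push_cast; rfl
    _ ≤ _ := mul_le_mul hlabels hpointers (by positivity) (by positivity)
end

section
/- Let k and r be positive integers with r < k, set m = k - r, and let a_1, …, a_r be positive integers with a_1 + ⋯ + a_r = k. If n is a positive integer divisible by m, then every uniform set partition of [n] with block size m avoids the layered partition L_{a_1,…,a_r}. -/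
/-!
Let `q = n / m`, so that `[n]` is cut into the `m` intervals `S_j` of length `q`, and send
`x ∈ [n]` to the index `j` of the interval `S_j` containing it. Two distinct elements of a block
of a uniform partition lie in different intervals, so along an occurrence `f` of
`L_{a_1,…,a_r}` the interval index of `f t` is weakly increasing in `t` and strictly increasing
inside each layer. It therefore grows by at least `a_i - 1` across the `i`-th layer, hence by at
least `k - r = m` in total, which leaves the `m` available intervals.
-/

open Finset

/-- The index `j` of the interval `S_j = {j·(n/m)+1, …, (j+1)·(n/m)}` containing `x`. -/
def intervalIndex (n m x : ℕ) : ℕ := (x - 1) / (n / m)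

theorem SameBlock.left_mem {n : ℕ} {P : Finpartition (Icc 1 n)} {i j : ℕ}
    (h : SameBlock P i j) : i ∈ Icc 1 n := by
  obtain ⟨B, hB, hi, -⟩ := h
  exact P.le hB hi

theorem SameBlock.right_mem {n : ℕ} {P : Finpartition (Icc 1 n)} {i j : ℕ}
    (h : SameBlock P i j) : j ∈ Icc 1 n := by
  obtain ⟨B, hB, -, hj⟩ := h
  exact P.le hB hj

theorem Nat.add_sub_le_of_strictMonoOn_Icc {g : ℕ → ℕ} {a b : ℕ}
    (hg : StrictMonoOn g (Set.Icc a b)) (hab : a ≤ b) : g a + (b - a) ≤ g b := by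
  suffices ∀ c, a ≤ c → c ≤ b → g a + (c - a) ≤ g c from this b hab le_rfl
  intro c hac
  induction c, hac using Nat.le_induction with
  | base => simp
  | succ c hac ih =>
    intro hcb
    have hstep : g c < g (c + 1) := hg ⟨hac, by omega⟩ ⟨by omega, hcb⟩ (by omega)
    have := ih (by omega)
    omega

section Uniform

variable {n m : ℕ}

theorem intervalIndex_mono : Monotone (intervalIndex n m) := fun _ _ hxy =>
  Nat.div_le_div_right (Nat.sub_le_sub_right hxy 1)

theorem intervalIndex_lt (hdvd : m ∣ n) {x : ℕ} (hx : x ∈ Icc 1 n) :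
    intervalIndex n m x < m := by
  have hn : m * (n / m) = n := Nat.mul_div_cancel' hdvd
  rw [mem_Icc] at hx
  exact Nat.div_lt_of_lt_mul (by rw [mul_comm, hn]; omega)

theorem mem_Icc_intervalIndex (hdvd : m ∣ n) {x : ℕ} (hx : x ∈ Icc 1 n) :
    x ∈ Icc (intervalIndex n m x * (n / m) + 1) ((intervalIndex n m x + 1) * (n / m)) := by
  have hn : m * (n / m) = n := Nat.mul_div_cancel' hdvd
  rw [mem_Icc] at hx ⊢
  have hq : 0 < n / m := Nat.pos_of_ne_zero fun h => by rw [h, mul_zero] at hn; omega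
  have hlo := Nat.div_mul_le_self (x - 1) (n / m)
  have hhi := Nat.lt_div_mul_add (a := x - 1) hq
  unfold intervalIndex
  rw [add_one_mul]
  constructor <;> omega

theorem IsUniform.intervalIndex_lt_of_sameBlock {σ : Finpartition (Icc 1 n)}
    (hσ : IsUniform n m σ) (hdvd : m ∣ n) {x y : ℕ} (hxy : x < y) (h : SameBlock σ x y) :
    intervalIndex n m x < intervalIndex n m y := by
  have hx := h.left_mem
  have hy := h.right_mem
  obtain ⟨B, hB, hxB, hyB⟩ := h
  refine lt_of_le_of_ne (intervalIndex_mono hxy.le) fun heq => ?_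
  have hone := hσ.2.2 _ (intervalIndex_lt hdvd hx) B hB
  have hyS := mem_Icc_intervalIndex hdvd hy
  rw [← heq] at hyS
  have : 1 < (Icc (intervalIndex n m x * (n / m) + 1)
      ((intervalIndex n m x + 1) * (n / m)) ∩ B).card :=
    one_lt_card.2 ⟨x, mem_inter.2 ⟨mem_Icc_intervalIndex hdvd hx, hxB⟩,
      y, mem_inter.2 ⟨hyS, hyB⟩, hxy.ne⟩
  omega

end Uniform

section Layered

variable {k r : ℕ} {a : ℕ → ℕ} {τ : Finpartition (Icc 1 k)}

theorem IsLayered.sameBlock (hτ : IsLayered r a τ) {j : ℕ} (hj : j < r) {s t : ℕ}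
    (hs : s ∈ Icc (∑ i ∈ range j, a i + 1) (∑ i ∈ range (j + 1), a i))
    (ht : t ∈ Icc (∑ i ∈ range j, a i + 1) (∑ i ∈ range (j + 1), a i)) :
    SameBlock τ s t :=
  ⟨_, hτ ▸ mem_image_of_mem _ (mem_range.2 hj), hs, ht⟩

theorem IsLayered.le_add_of_strictMonoOn_blocks (hτ : IsLayered r a τ) (ha : ∀ i < r, 0 < a i)
    (hsum : ∑ i ∈ range r, a i = k) {g : ℕ → ℕ} (hmono : MonotoneOn g (Set.Icc 1 k))
    (hstrict : ∀ s t, s < t → SameBlock τ s t → g s < g t) : k ≤ g k + r := by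
  set S : ℕ → ℕ := fun j => ∑ i ∈ range j, a i with hS_def
  have hS_zero : S 0 = 0 := sum_range_zero a
  have hS_succ (j : ℕ) : S (j + 1) = S j + a j := sum_range_succ a j
  have hS_le (j : ℕ) (hj : j ≤ r) : S j ≤ k :=
    hsum ▸ sum_le_sum_of_subset (range_subset_range.2 hj)
  have hlayer (j : ℕ) (hj : j < r) : g (S j + 1) + (a j - 1) ≤ g (S (j + 1)) := by
    have hpos := ha j hj
    have h := Nat.add_sub_le_of_strictMonoOn_Icc (a := S j + 1) (b := S (j + 1))
      (fun s hs t ht hst => hstrict s t hst (hτ.sameBlock hj (mem_Icc.2 hs) (mem_Icc.2 ht)))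
      (by rw [hS_succ]; omega)
    rwa [show S (j + 1) - (S j + 1) = a j - 1 by rw [hS_succ]; omega] at h
  have hclimb (j : ℕ) (hj : j < r) : S (j + 1) ≤ g (S (j + 1)) + (j + 1) := by
    induction j with
    | zero =>
      have := hlayer 0 hj
      have := hS_succ 0
      omega
    | succ j ih =>
      have hprev := ih (by omega)
      have hS_pos : 1 ≤ S (j + 1) := by have := ha j (by omega); rw [hS_succ]; omega
      have hS_next := hS_succ (j + 1)
      have ha_next := ha (j + 1) hj
      have hS_next_le := hS_le (j + 1 + 1) hj
      have hmid : g (S (j + 1)) ≤ g (S (j + 1) + 1) :=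
        hmono ⟨hS_pos, by omega⟩ ⟨by omega, by omega⟩ (by omega)
      have := hlayer (j + 1) hj
      omega
  cases r with
  | zero => rw [sum_range_zero] at hsum; omega
  | succ r => simpa [hS_def, hsum] using hclimb r (by omega)

end Layered

theorem uniform_avoids_layered_general (k r : ℕ) (hrk : r < k) (a : ℕ → ℕ)
    (ha : ∀ i < r, 0 < a i) (hsum : ∑ i ∈ Finset.range r, a i = k)
    (τ : Finpartition (Finset.Icc 1 k)) (hτ : IsLayered r a τ)
    (n : ℕ) (hdvd : (k - r) ∣ n)
    (σ : Finpartition (Finset.Icc 1 n)) (hσ : IsUniform n (k - r) σ) :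
    ¬ SetPartContains σ τ := by
  rintro ⟨f, hf_mem, hf_lt, hf_block⟩
  set g := fun t => intervalIndex n (k - r) (f t)
  have hg_k : g k < k - r := intervalIndex_lt hdvd (hf_mem k (mem_Icc.2 ⟨by omega, le_rfl⟩))
  have hf_mono : StrictMonoOn f (Set.Icc 1 k) := fun s hs t ht hst =>
    hf_lt s (mem_Icc.2 hs) t (mem_Icc.2 ht) hst
  have hmono : MonotoneOn g (Set.Icc 1 k) := intervalIndex_mono.comp_monotoneOn hf_mono.monotoneOn
  have hstrict : ∀ s t, s < t → SameBlock τ s t → g s < g t := fun s t hst h =>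
    hσ.intervalIndex_lt_of_sameBlock hdvd (hf_lt s h.left_mem t h.right_mem hst)
      ((hf_block s h.left_mem t h.right_mem).1 h)
  have := hτ.le_add_of_strictMonoOn_blocks ha hsum hmono hstrict
  omega

/-- For `m = k - r` with `0 < r < k` and `m ∣ n`, every uniform set partition
of `[n]` with block size `m` avoids the layered partition `L_{a_1,…,a_r}` of `[k]`. -/
theorem uniform_avoids_layered (k r : ℕ) (hr : 0 < r) (hrk : r < k) (a : ℕ → ℕ)
    (ha : ∀ i < r, 0 < a i) (hsum : ∑ i ∈ Finset.range r, a i = k)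
    (τ : Finpartition (Finset.Icc 1 k)) (hτ : IsLayered r a τ)
    (n : ℕ) (hn : 0 < n) (hdvd : (k - r) ∣ n)
    (σ : Finpartition (Finset.Icc 1 n)) (hσ : IsUniform n (k - r) σ) :
    ¬ SetPartContains σ τ :=
  uniform_avoids_layered_general k r hrk a ha hsum τ hτ n hdvd σ hσ
end

section
/- Let τ be a set partition of [k] and suppose there are at most r - 1 indices i with 1 ≤ i ≤ k - 1 such that i and i+1 lie in different blocks of τ, where 1 ≤ r < k. Set m = k - r. If n is a positive integer divisible by m, then every uniform set partition of [n] with block size m avoids τ. -/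
/-!
If `f : [k] → [n]` embeds `τ` into a uniform partition `σ` with block size `m`, let `g i` be the
index of the interval `S_j` containing `f i`. Then `g` is weakly increasing, and it strictly
increases at every `i` with `i, i + 1` in the same block of `τ`, because a block of `σ` meets
each `S_j` only once. Hence there are fewer than `m` such `i`, i.e. at least `k - m = r` breaks.
-/

open Finset

/-- The interval `S_j` of `IsUniform n m`, with `q = n / m`. -/
def slab (q j : ℕ) : Finset ℕ := Icc (j * q + 1) ((j + 1) * q)

lemma mem_slab_pred_div {q x : ℕ} (hq : 0 < q) (hx : 1 ≤ x) : x ∈ slab q ((x - 1) / q) := by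
  have := Nat.div_add_mod' (x - 1) q
  have := Nat.mod_lt (x - 1) hq
  simp only [slab, mem_Icc, Nat.add_mul, Nat.one_mul]
  omega

lemma card_filter_lt_succ_add_le {g : ℕ → ℕ} {a b : ℕ} (hab : a ≤ b)
    (hg : ∀ i ∈ Ico a b, g i ≤ g (i + 1)) :
    #{i ∈ Ico a b | g i < g (i + 1)} + g a ≤ g b := by
  induction b, hab using Nat.le_induction with
  | base => simp
  | succ b hab ih =>
    have ih := ih fun i hi => hg i (Ico_subset_Ico_right b.le_succ hi)
    have hb := hg b (by simp [hab])
    rw [Nat.Ico_succ_right_eq_insert_Ico hab, filter_insert]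
    split_ifs with hlt
    · rw [card_insert_of_notMem (by simp)]
      omega
    · omega

lemma mem_Icc_and_succ_mem_Icc {i k : ℕ} (hi : i ∈ Ico 1 k) : i ∈ Icc 1 k ∧ i + 1 ∈ Icc 1 k := by
  simp only [mem_Ico] at hi
  simp only [mem_Icc]
  omega

lemma pred_div_div_lt {n m x : ℕ} (hdvd : m ∣ n) (hx : x ∈ Icc 1 n) : (x - 1) / (n / m) < m := by
  obtain ⟨q, rfl⟩ := hdvd
  rw [mem_Icc] at hx
  have hm : 0 < m := Nat.pos_of_ne_zero (by rintro rfl; omega)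
  have hq : 0 < q := Nat.pos_of_ne_zero (by rintro rfl; omega)
  rw [Nat.mul_div_cancel_left q hm, Nat.div_lt_iff_lt_mul hq]
  omega

namespace IsUniform

variable {n m : ℕ} {σ : Finpartition (Icc 1 n)}

lemma pred_div_ne_of_sameBlock (hσ : IsUniform n m σ) (hdvd : m ∣ n) {x y : ℕ}
    (hx : x ∈ Icc 1 n) (hy : y ∈ Icc 1 n) (hxy : x ≠ y) (hσxy : SameBlock σ x y) :
    (x - 1) / (n / m) ≠ (y - 1) / (n / m) := by
  have hn : 0 < n := by rw [mem_Icc] at hx; omega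
  have hq : 0 < n / m := Nat.div_pos (Nat.le_of_dvd hn hdvd) (Nat.pos_of_dvd_of_pos hdvd hn)
  obtain ⟨B, hB, hxB, hyB⟩ := hσxy
  intro hxy_slab
  have hslab := hσ.2.2 _ (pred_div_div_lt hdvd hx) B hB
  have hyS : y ∈ slab (n / m) ((x - 1) / (n / m)) :=
    hxy_slab ▸ mem_slab_pred_div hq (mem_Icc.mp hy).1
  exact hxy (card_le_one.mp hslab.le x
    (mem_inter.mpr ⟨mem_slab_pred_div hq (mem_Icc.mp hx).1, hxB⟩) y (mem_inter.mpr ⟨hyS, hyB⟩))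

lemma card_filter_sameBlock_succ_lt (hσ : IsUniform n m σ) (hdvd : m ∣ n) {k : ℕ} (hk : 1 ≤ k)
    {f : ℕ → ℕ} (hf_mem : ∀ i ∈ Icc 1 k, f i ∈ Icc 1 n)
    (hf_succ : ∀ i ∈ Ico 1 k, f i < f (i + 1)) :
    #{i ∈ Ico 1 k | SameBlock σ (f i) (f (i + 1))} < m := by
  set g : ℕ → ℕ := fun i => (f i - 1) / (n / m)
  have hg_succ : ∀ i ∈ Ico 1 k, g i ≤ g (i + 1) := fun i hi =>
    Nat.div_le_div_right (Nat.sub_le_sub_right (hf_succ i hi).le 1)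
  have hsame_sub : {i ∈ Ico 1 k | SameBlock σ (f i) (f (i + 1))} ⊆
      {i ∈ Ico 1 k | g i < g (i + 1)} := by
    intro i
    simp only [mem_filter]
    rintro ⟨hi, hsame⟩
    have hi' := mem_Icc_and_succ_mem_Icc hi
    exact ⟨hi, lt_of_le_of_ne (hg_succ i hi) (hσ.pred_div_ne_of_sameBlock hdvd
      (hf_mem i hi'.1) (hf_mem _ hi'.2) (hf_succ i hi).ne hsame)⟩
  calc #{i ∈ Ico 1 k | SameBlock σ (f i) (f (i + 1))}
      ≤ #{i ∈ Ico 1 k | g i < g (i + 1)} := card_le_card hsame_sub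
    _ ≤ g k := by have := card_filter_lt_succ_add_le hk hg_succ; omega
    _ < m := pred_div_div_lt hdvd (hf_mem k (by simp [hk]))

end IsUniform

theorem uniform_avoids_few_breaks_general (k r : ℕ) (hr : 0 < r) (hrk : r < k)
    (τ : Finpartition (Finset.Icc 1 k))
    (hτ : ((Finset.Icc 1 (k - 1)).filter fun i => ¬ SameBlock τ i (i + 1)).card ≤ r - 1)
    (n : ℕ) (hdvd : (k - r) ∣ n)
    (σ : Finpartition (Finset.Icc 1 n)) (hσ : IsUniform n (k - r) σ) :
    ¬ SetPartContains σ τ := by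
  rintro ⟨f, hf_mem, hf_mono, hf_block⟩
  have hIco : Icc 1 (k - 1) = Ico 1 k := by ext; simp only [mem_Icc, mem_Ico]; omega
  have hsame : #{i ∈ Ico 1 k | SameBlock τ i (i + 1)} < k - r := by
    have hmem := @mem_Icc_and_succ_mem_Icc
    rw [filter_congr fun i hi => hf_block i (hmem hi).1 (i + 1) (hmem hi).2]
    exact hσ.card_filter_sameBlock_succ_lt hdvd (by omega) hf_mem
      fun i hi => hf_mono i (hmem hi).1 (i + 1) (hmem hi).2 (lt_add_one i)
  have hsplit :=
    card_filter_add_card_filter_not (s := Ico 1 k) (p := fun i => SameBlock τ i (i + 1))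
  rw [hIco] at hτ
  rw [Nat.card_Ico] at hsplit
  omega

/-- If a set partition `τ` of `[k]` has at most `r - 1` indices
`1 ≤ i ≤ k - 1` with `i` and `i+1` in different blocks (where `1 ≤ r < k`), and `m = k - r`
divides `n`, then every uniform set partition of `[n]` with block size `m` avoids `τ`. -/
theorem uniform_avoids_few_breaks (k r : ℕ) (hr : 0 < r) (hrk : r < k)
    (τ : Finpartition (Finset.Icc 1 k))
    (hτ : ((Finset.Icc 1 (k - 1)).filter fun i => ¬ SameBlock τ i (i + 1)).card ≤ r - 1)
    (n : ℕ) (hn : 0 < n) (hdvd : (k - r) ∣ n)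
    (σ : Finpartition (Finset.Icc 1 n)) (hσ : IsUniform n (k - r) σ) :
    ¬ SetPartContains σ τ :=
  uniform_avoids_few_breaks_general k r hr hrk τ hτ n hdvd σ hσ
end

section
/- Let k and r be positive integers with r < k, set m = k - r, and let a_1, …, a_r be positive integers with a_1 + ⋯ + a_r = k. If n is a positive integer divisible by m, then A_n(L_{a_1,…,a_r}) ≥ ((n/m)!)^(m-1). -/
/-!
Write `n = m q` and cut `[n]` into the `m` consecutive intervals of length `q`. A set partition
with `q` blocks each meeting every interval exactly once is given by one permutation of `[q]`
per interval, and fixing the permutation of the first interval to be the identity gives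
`(q!)^(m-1)` distinct such partitions. None of them contains `L_{a_1,…,a_r}`: along a copy of it,
the interval index of the image never decreases and strictly increases at each of the `k - r`
steps inside a block of `L_{a_1,…,a_r}`, so it would have to reach `k - r = m`.
-/

open Finset

lemma exists_lt_le_succ_of_lt_of_le (s : ℕ → ℕ) {x : ℕ} :
    ∀ {r : ℕ}, s 0 < x → x ≤ s r → ∃ j < r, s j < x ∧ x ≤ s (j + 1)
  | 0, h0, hr => absurd hr (not_le.2 h0)
  | r + 1, h0, hr => by
    by_cases h : x ≤ s r
    · obtain ⟨j, hj, hlt, hle⟩ := exists_lt_le_succ_of_lt_of_le s h0 h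
      exact ⟨j, hj.trans r.lt_succ_self, hlt, hle⟩
    · exact ⟨r, r.lt_succ_self, not_le.1 h, hr⟩

lemma add_card_filter_lt_succ_le (g : ℕ → ℕ) {a b : ℕ} (hab : a ≤ b)
    (hg : ∀ x ∈ Ico a b, g x ≤ g (x + 1)) :
    g a + #{x ∈ Ico a b | g x < g (x + 1)} ≤ g b := by
  induction b, hab using Nat.le_induction with
  | base => simp
  | succ b hab ih =>
    have ih := ih fun x hx => hg x (Ico_subset_Ico_right b.le_succ hx)
    have hb := hg b (by simp [hab])
    rw [Nat.Ico_succ_right_eq_insert_Ico hab, filter_insert]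
    split_ifs
    · rw [card_insert_of_notMem (by simp)]
      omega
    · omega

lemma IsLayered.card_filter_not_sameBlock_succ_le {k r : ℕ} {a : ℕ → ℕ}
    {τ : Finpartition (Icc 1 k)} (hτ : IsLayered r a τ) (hsum : ∑ i ∈ range r, a i = k) :
    #{x ∈ Ico 1 k | ¬ SameBlock τ x (x + 1)} ≤ r - 1 := by
  set s : ℕ → ℕ := fun j => ∑ i ∈ range j, a i with hs
  calc _ ≤ #((range (r - 1)).image fun j => s (j + 1)) := card_le_card ?_
    _ ≤ r - 1 := card_image_le.trans (card_range _).le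
  intro x hx
  obtain ⟨⟨hx1, hxk⟩, hsep⟩ : (1 ≤ x ∧ x < k) ∧ ¬ SameBlock τ x (x + 1) := by simpa using hx
  obtain ⟨j, hjr, hlo, hhi⟩ := exists_lt_le_succ_of_lt_of_le s (x := x) (r := r)
    (by simp only [hs, range_zero, sum_empty]; omega) (by simp only [hs, hsum]; omega)
  have hend : x = s (j + 1) := by
    by_contra hne
    have hblock : Icc (s j + 1) (s (j + 1)) ∈ τ.parts := hτ ▸ mem_image_of_mem _ (mem_range.2 hjr)
    exact hsep ⟨_, hblock, mem_Icc.2 ⟨hlo, hhi⟩, mem_Icc.2 ⟨by omega, by omega⟩⟩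
  have hjr' : j + 1 ≠ r := by
    rintro rfl
    simp only [hs, hsum] at hend
    omega
  exact mem_image.2 ⟨j, mem_range.2 (by omega), hend.symm⟩

theorem not_setPartContains_of_isLayered {n k r m : ℕ} {a : ℕ → ℕ}
    {σ : Finpartition (Icc 1 n)} {τ : Finpartition (Icc 1 k)}
    (hτ : IsLayered r a τ) (hsum : ∑ i ∈ range r, a i = k) (hk : 0 < k) (hmrk : m + r ≤ k)
    (ℓ : ℕ → ℕ) (hℓ : Monotone ℓ) (hℓlt : ∀ y ∈ Icc 1 n, ℓ y < m)
    (hσ : ∀ u v, SameBlock σ u v → u < v → ℓ u < ℓ v) :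
    ¬ SetPartContains σ τ := by
  rintro ⟨f, hf_mem, hf_lt, hf_block⟩
  have hr : 0 < r := Nat.pos_of_ne_zero <| by
    rintro rfl
    simp only [range_zero, sum_empty] at hsum
    omega
  have hmem {x : ℕ} (h : x ∈ Ico 1 k) : x ∈ Icc 1 k := Ico_subset_Icc_self h
  have hmem_succ {x : ℕ} (h : x ∈ Ico 1 k) : x + 1 ∈ Icc 1 k := by simp only [mem_Ico, mem_Icc] at h ⊢; omega
  have hf_succ {x : ℕ} (h : x ∈ Ico 1 k) : f x < f (x + 1) :=
    hf_lt x (hmem h) (x + 1) (hmem_succ h) x.lt_succ_self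
  have hclimb := add_card_filter_lt_succ_le (ℓ ∘ f) (a := 1) hk fun x hx => hℓ (hf_succ hx).le
  have hsteps : #{x ∈ Ico 1 k | SameBlock τ x (x + 1)}
      ≤ #{x ∈ Ico 1 k | (ℓ ∘ f) x < (ℓ ∘ f) (x + 1)} := by
    refine card_le_card (monotone_filter_right _ fun x hx hsame => ?_)
    exact hσ _ _ ((hf_block x (hmem hx) (x + 1) (hmem_succ hx)).1 hsame) (hf_succ hx)
  have hsplit := card_filter_add_card_filter_not (s := Ico 1 k) fun x => SameBlock τ x (x + 1)
  have hbreaks := hτ.card_filter_not_sameBlock_succ_le hsum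
  have htop : ℓ (f k) < m := hℓlt _ (hf_mem k (mem_Icc.2 ⟨hk, le_rfl⟩))
  simp only [Function.comp_apply, Nat.card_Ico] at hclimb hsteps hsplit
  omega

namespace UniformPartition

variable {m q : ℕ}

lemma mul_add_div_eq {j c : ℕ} (hc : c < q) : (j * q + c) / q = j := by
  rw [add_comm, Nat.add_mul_div_right _ _ (by omega), Nat.div_eq_of_lt hc, zero_add]

lemma eq_and_eq_of_mul_add_eq {j j' c c' : ℕ} (hc : c < q) (hc' : c' < q)
    (h : j * q + c = j' * q + c') : j = j' ∧ c = c' :=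
  ⟨by rw [← mul_add_div_eq (j := j) hc, h, mul_add_div_eq hc'],
    by rw [← Nat.mul_add_mod_of_lt (a := j) hc, h, Nat.mul_add_mod_of_lt hc']⟩

def block (p : Fin m → Equiv.Perm (Fin q)) (b : Fin q) : Finset ℕ :=
  univ.image fun j : Fin m => j * q + p j b + 1

section

variable {p p' : Fin m → Equiv.Perm (Fin q)} {b b' : Fin q} {x u v : ℕ}

lemma mem_block : x ∈ block p b ↔ ∃ j : Fin m, (j : ℕ) * q + p j b + 1 = x := by
  simp [block]

lemma eq_of_mem_block (hx : x ∈ block p b) (hx' : x ∈ block p b') : b = b' := by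
  obtain ⟨j, rfl⟩ := mem_block.1 hx
  obtain ⟨j', hj'⟩ := mem_block.1 hx'
  obtain ⟨hjj', hc⟩ := eq_and_eq_of_mul_add_eq (p j' b').isLt (p j b).isLt (Nat.succ_injective hj')
  obtain rfl : j' = j := Fin.ext hjj'
  exact ((p j').injective (Fin.ext hc)).symm

lemma apply_eq_of_block_eq (h : block p b = block p' b) (j : Fin m) : p j b = p' j b := by
  have hx : (j : ℕ) * q + p j b + 1 ∈ block p' b := h ▸ mem_block.2 ⟨j, rfl⟩
  obtain ⟨j', hj'⟩ := mem_block.1 hx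
  obtain ⟨hjj', hc⟩ := eq_and_eq_of_mul_add_eq (p' j' b).isLt (p j b).isLt (Nat.succ_injective hj')
  obtain rfl : j' = j := Fin.ext hjj'
  exact Fin.ext hc.symm

lemma div_lt_div_of_mem_block (hu : u ∈ block p b) (hv : v ∈ block p b) (huv : u < v) :
    (u - 1) / q < (v - 1) / q := by
  obtain ⟨j, rfl⟩ := mem_block.1 hu
  obtain ⟨j', rfl⟩ := mem_block.1 hv
  simp only [Nat.add_sub_cancel, mul_add_div_eq (p _ b).isLt] at huv ⊢
  refine lt_of_le_of_ne ?_ fun hjj' => huv.ne ?_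
  · by_contra! hlt
    nlinarith [(p j b).isLt, (p j' b).isLt]
  · obtain rfl : j = j' := Fin.ext hjj'
    rfl

end

variable [NeZero m]

/-- The set partition of `[m q]` whose block `b` meets the interval `{j q + 1, …, j q + q}` in the
single point `j q + p j b + 1`. -/
def _root_.uniformPartition (p : Fin m → Equiv.Perm (Fin q)) : Finpartition (Icc 1 (m * q)) where
  parts := univ.image (block p)
  supIndep := by
    rw [supIndep_iff_pairwiseDisjoint]
    simp only [coe_image, coe_univ, Set.image_univ]
    rintro _ ⟨b, rfl⟩ _ ⟨b', rfl⟩ hne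
    exact disjoint_left.2 fun x hx hx' => hne (congrArg (block p) (eq_of_mem_block hx hx'))
  sup_parts := by
    ext x
    simp only [sup_image, Function.id_comp, mem_sup, mem_univ, true_and, mem_Icc]
    constructor
    · rintro ⟨b, hb⟩
      obtain ⟨j, rfl⟩ := mem_block.1 hb
      have hj : (j : ℕ) + 1 ≤ m := j.isLt
      refine ⟨by omega, ?_⟩
      nlinarith [(p j b).isLt]
    · rintro ⟨hx1, hxn⟩
      have hq : 0 < q := Nat.pos_of_ne_zero (by rintro rfl; omega)
      let j : Fin m := ⟨(x - 1) / q, (Nat.div_lt_iff_lt_mul hq).2 (by omega)⟩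
      refine ⟨(p j).symm ⟨(x - 1) % q, Nat.mod_lt _ hq⟩, mem_block.2 ⟨j, ?_⟩⟩
      simp only [Equiv.apply_symm_apply, j, Nat.div_add_mod']
      omega
  bot_notMem := by
    rw [mem_image]
    rintro ⟨b, -, hb⟩
    exact notMem_empty _ (hb ▸ mem_block.2 ⟨0, rfl⟩)

variable {p : Fin m → Equiv.Perm (Fin q)} {b : Fin q} {x u v : ℕ}

lemma block_mem_parts : block p b ∈ (uniformPartition p).parts := mem_image_of_mem _ (mem_univ b)

lemma part_uniformPartition (hx : x ∈ block p b) : (uniformPartition p).part x = block p b :=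
  (uniformPartition p).part_eq_of_mem block_mem_parts hx

lemma div_lt_div_of_sameBlock (h : SameBlock (uniformPartition p) u v) (huv : u < v) :
    (u - 1) / q < (v - 1) / q := by
  obtain ⟨_, hB, hu, hv⟩ := h
  obtain ⟨b, -, rfl⟩ := mem_image.1 hB
  exact div_lt_div_of_mem_block hu hv huv

end UniformPartition

open UniformPartition in
lemma uniformPartition_cons_injective {m q : ℕ} :
    Function.Injective fun g : Fin m → Equiv.Perm (Fin q) => uniformPartition (Fin.cons 1 g) := by
  intro g g' h
  funext j
  refine Equiv.ext fun b => ?_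
  have hb (g : Fin m → Equiv.Perm (Fin q)) : (b : ℕ) + 1 ∈ block (Fin.cons 1 g) b :=
    mem_block.2 ⟨0, by simp⟩
  have hblock : block (Fin.cons 1 g) b = block (Fin.cons 1 g') b := by
    rw [← part_uniformPartition (hb g), ← part_uniformPartition (hb g')]
    exact congrArg (Finpartition.part · _) h
  simpa using apply_eq_of_block_eq hblock j.succ

lemma uniformPartition_not_setPartContains {m q k r : ℕ} [NeZero m] {a : ℕ → ℕ}
    {τ : Finpartition (Icc 1 k)} (hτ : IsLayered r a τ) (hsum : ∑ i ∈ range r, a i = k)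
    (hmrk : m + r ≤ k) (p : Fin m → Equiv.Perm (Fin q)) :
    ¬ SetPartContains (uniformPartition p) τ := by
  have hm : 0 < m := Nat.pos_of_neZero m
  refine not_setPartContains_of_isLayered hτ hsum (by omega) hmrk (fun y => (y - 1) / q)
    (fun _ _ h => Nat.div_le_div_right (Nat.sub_le_sub_right h 1)) (fun y hy => ?_)
    fun _ _ => UniformPartition.div_lt_div_of_sameBlock
  have hq : 0 < q := Nat.pos_of_ne_zero (by rintro rfl; simp at hy)
  exact (Nat.div_lt_iff_lt_mul hq).2 (by rw [mem_Icc] at hy; omega)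

theorem layered_factorial_lower_bound_general (k r : ℕ) (hrk : r < k) (a : ℕ → ℕ)
    (hsum : ∑ i ∈ Finset.range r, a i = k)
    (τ : Finpartition (Finset.Icc 1 k)) (hτ : IsLayered r a τ)
    (n : ℕ) (hdvd : (k - r) ∣ n) :
    (n / (k - r)).factorial ^ (k - r - 1) ≤ A n τ := by
  obtain ⟨m, hm⟩ : ∃ m, k - r = m + 1 := ⟨k - r - 1, by omega⟩
  obtain ⟨q, rfl⟩ := hdvd
  rw [hm, Nat.mul_div_cancel_left q m.succ_pos, Nat.add_sub_cancel]
  have havoid (g : Fin m → Equiv.Perm (Fin q)) :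
      ¬ SetPartContains (uniformPartition (Fin.cons 1 g)) τ :=
    uniformPartition_not_setPartContains hτ hsum (by omega) _
  calc q.factorial ^ m = Nat.card (Fin m → Equiv.Perm (Fin q)) := by simp [Fintype.card_perm]
    _ ≤ A ((m + 1) * q) τ := Nat.card_le_card_of_injective (fun g => ⟨_, havoid g⟩)
      fun _ _ h => uniformPartition_cons_injective (congrArg Subtype.val h)

/-- For a layered partition `L_{a_1,…,a_r}` of `[k]` with `r < k`,
`m = k - r`, and `m ∣ n`, we have `A_n(L_{a_1,…,a_r}) ≥ ((n/m)!)^(m-1)`. -/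
theorem layered_factorial_lower_bound (k r : ℕ) (hr : 0 < r) (hrk : r < k) (a : ℕ → ℕ)
    (ha : ∀ i < r, 0 < a i) (hsum : ∑ i ∈ Finset.range r, a i = k)
    (τ : Finpartition (Finset.Icc 1 k)) (hτ : IsLayered r a τ)
    (n : ℕ) (hn : 0 < n) (hdvd : (k - r) ∣ n) :
    (n / (k - r)).factorial ^ (k - r - 1) ≤ A n τ :=
  layered_factorial_lower_bound_general k r hrk a hsum τ hτ n hdvd
end

section
/- Let τ be a set partition of [k] and suppose τ contains a set partition P of [k'] such that the number of indices i with 1 ≤ i ≤ k' - 1 for which i and i+1 lie in different blocks of P is strictly less than r', where 1 ≤ r' < k'. Then there exists a real constant c > 0 such that for all positive integers n, A_n(τ) ≥ c^n · n^(n(1 - 1/(k'-r'))). -/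
/-!
Let `m = k' - r'`, so that `Q` has at least `m` indices `i` with `i` and `i + 1` in the same
block. Cut `[1, mN]`, where `N = ⌊n / m⌋`, into `m` consecutive intervals of length `N` and pick
a permutation of `[N]` for each interval, the first one being the identity; points with the same
label in their interval form a block, and the points beyond `mN` are singletons. Every block meets
each interval at most once, so along an occurrence of `Q` the interval index would have to
increase strictly at least `m` times, which is impossible with `m` intervals. This gives
`(N!)^(m-1)` partitions avoiding `Q`, hence `τ`, and `k^k ≤ e^k k!` turns this count into the
bound `c^n n^(n(1 - 1/m))`.
-/

open Finset

section Containment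

variable {k k' n : ℕ}

theorem SetPartContains.trans {σ : Finpartition (Icc 1 n)} {τ : Finpartition (Icc 1 k)}
    {Q : Finpartition (Icc 1 k')} (hστ : SetPartContains σ τ) (hτQ : SetPartContains τ Q) :
    SetPartContains σ Q := by
  obtain ⟨f, hf_mem, hf_mono, hf_block⟩ := hστ
  obtain ⟨g, hg_mem, hg_mono, hg_block⟩ := hτQ
  refine ⟨f ∘ g, fun i hi => hf_mem _ (hg_mem i hi),
    fun i hi j hj hij => hf_mono _ (hg_mem i hi) _ (hg_mem j hj) (hg_mono i hi j hj hij),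
    fun i hi j hj => ?_⟩
  exact (hg_block i hi j hj).trans (hf_block _ (hg_mem i hi) _ (hg_mem j hj))

theorem A_le_A_of_setPartContains {τ : Finpartition (Icc 1 k)} {Q : Finpartition (Icc 1 k')}
    (hτQ : SetPartContains τ Q) : A n Q ≤ A n τ :=
  Nat.card_le_card_of_injective (fun σ => ⟨σ.1, fun hστ => σ.2 (hστ.trans hτQ)⟩)
    fun _ _ h => Subtype.ext (Subtype.mk.inj h)

end Containment

theorem sameBlock_iff_mem_part {n : ℕ} (P : Finpartition (Icc 1 n)) (i j : ℕ) :
    SameBlock P i j ↔ i ∈ P.part j :=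
  P.mem_part_iff_exists.symm

def fiberPartition (n : ℕ) {β : Type*} [DecidableEq β] (f : ℕ → β) : Finpartition (Icc 1 n) :=
  Finpartition.ofSetSetoid (Setoid.ker f) (Icc 1 n)

theorem sameBlock_fiberPartition {n : ℕ} {β : Type*} [DecidableEq β] (f : ℕ → β) (i j : ℕ) :
    SameBlock (fiberPartition n f) i j ↔
      i ∈ Icc 1 n ∧ j ∈ Icc 1 n ∧ f i = f j := by
  rw [sameBlock_iff_mem_part, fiberPartition, Finpartition.mem_part_ofSetSetoid_iff_rel,
    Setoid.ker_def]
  tauto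

def adjacentSameBlock {k : ℕ} (Q : Finpartition (Icc 1 k)) : Finset ℕ :=
  {i ∈ Icc 1 (k - 1) | SameBlock Q i (i + 1)}

theorem mem_Icc_of_mem_adjacentSameBlock {k t : ℕ} {Q : Finpartition (Icc 1 k)}
    (ht : t ∈ adjacentSameBlock Q) : t ∈ Icc 1 k ∧ t + 1 ∈ Icc 1 k := by
  have := (mem_filter.1 ht).1
  simp only [mem_Icc] at this ⊢
  omega

/-- Along an occurrence of `Q`, each index of `adjacentSameBlock Q` forces a strict increase of
the level `g`, so these indices get distinct levels below `l`. -/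
theorem not_setPartContains_of_level {n k l : ℕ} {σ : Finpartition (Icc 1 n)}
    (Q : Finpartition (Icc 1 k)) (g : ℕ → ℕ) (hg : Monotone g)
    (hσ : ∀ x y, x < y → SameBlock σ x y → g x < g y ∧ g y ≤ l)
    (hQ : l < #(adjacentSameBlock Q)) : ¬ SetPartContains σ Q := by
  rintro ⟨f, -, hf_mono, hf_block⟩
  have step : ∀ t ∈ adjacentSameBlock Q, g (f t) < g (f (t + 1)) ∧ g (f (t + 1)) ≤ l := by
    intro t ht
    obtain ⟨ht₀, ht₁⟩ := mem_Icc_of_mem_adjacentSameBlock ht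
    exact hσ _ _ (hf_mono t ht₀ _ ht₁ t.lt_add_one) ((hf_block t ht₀ _ ht₁).1 (mem_filter.1 ht).2)
  have hstrict : StrictMonoOn (g ∘ f) (adjacentSameBlock Q) := by
    intro t ht t' ht' hlt
    have hle : f (t + 1) ≤ f t' := by
      rcases (Nat.succ_le_of_lt hlt).eq_or_lt with heq | hlt'
      · rw [← heq]
      · exact (hf_mono _ (mem_Icc_of_mem_adjacentSameBlock ht).2 t'
          (mem_Icc_of_mem_adjacentSameBlock ht').1 hlt').le
    exact (step t ht).1.trans_le (hg hle)
  have hmaps : Set.MapsTo (g ∘ f) (adjacentSameBlock Q) (range l) := fun t ht =>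
    mem_range.2 ((step t ht).1.trans_le (step t ht).2)
  have := card_le_card_of_injOn _ hmaps hstrict.injOn
  rw [card_range] at this
  omega

section UniformPartition

variable {m N : ℕ}

/-- The `c`-th point of the `j`-th of the `m` consecutive length-`N` intervals of `[1, mN]`
(position `finProdFinEquiv (j, c) + 1`) gets label `(p j)⁻¹ c`; points beyond `mN` get labels
of their own. -/
def uniformLabel (p : Fin m → Equiv.Perm (Fin N)) (x : ℕ) : Fin N ⊕ ℕ :=
  if h : x - 1 < m * N then
    .inl ((p (finProdFinEquiv.symm ⟨x - 1, h⟩).1).symm (finProdFinEquiv.symm ⟨x - 1, h⟩).2)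
  else .inr x

def uniformPartition_s13 (n : ℕ) (p : Fin m → Equiv.Perm (Fin N)) : Finpartition (Icc 1 n) :=
  fiberPartition n (uniformLabel p)

theorem uniformLabel_finProdFinEquiv (p : Fin m → Equiv.Perm (Fin N)) (j : Fin m) (c : Fin N) :
    uniformLabel p (finProdFinEquiv (j, c) + 1) = .inl ((p j).symm c) := by
  have hpos : (finProdFinEquiv (j, c) : ℕ) + 1 - 1 < m * N := by
    rw [Nat.add_sub_cancel]; exact Fin.isLt _
  have hval : (⟨_, hpos⟩ : Fin (m * N)) = finProdFinEquiv (j, c) := Fin.ext (Nat.add_sub_cancel ..)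
  rw [uniformLabel, dif_pos hpos, hval, Equiv.symm_apply_apply]

theorem uniformLabel_level (p : Fin m → Equiv.Perm (Fin N)) {x y : ℕ} (hx : 1 ≤ x) (hxy : x < y)
    (h : uniformLabel p x = uniformLabel p y) : (x - 1) / N < (y - 1) / N ∧ (y - 1) / N < m := by
  unfold uniformLabel at h
  split_ifs at h with hx' hy'
  · set a := finProdFinEquiv.symm ⟨x - 1, hx'⟩
    set b := finProdFinEquiv.symm ⟨y - 1, hy'⟩
    have ha₁ : (a.1 : ℕ) = (x - 1) / N := rfl
    have hb₁ : (b.1 : ℕ) = (y - 1) / N := rfl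
    refine ⟨(Nat.div_le_div_right (by omega)).lt_of_ne fun heq => ?_, hb₁ ▸ b.1.isLt⟩
    have h₁ : a.1 = b.1 := Fin.ext (ha₁.trans (heq.trans hb₁.symm))
    rw [h₁] at h
    have hab : a = b := Prod.ext h₁ ((p b.1).symm.injective (Sum.inl_injective h))
    have := congrArg Fin.val (finProdFinEquiv.symm.injective hab)
    simp only at this
    omega
  · exact absurd (Sum.inr_injective h) hxy.ne

theorem uniformPartition_not_setPartContains_s13 {n k : ℕ} (p : Fin (m + 1) → Equiv.Perm (Fin N))
    (Q : Finpartition (Icc 1 k)) (hQ : m < #(adjacentSameBlock Q)) :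
    ¬ SetPartContains (uniformPartition_s13 n p) Q :=
  not_setPartContains_of_level Q (fun x => (x - 1) / N)
    (fun _ _ hab => Nat.div_le_div_right (Nat.sub_le_sub_right hab 1)) (fun x y hxy hsame => by
      obtain ⟨hx, -, hlab⟩ := (sameBlock_fiberPartition _ _ _).1 hsame
      have := uniformLabel_level p (mem_Icc.1 hx).1 hxy hlab
      omega) hQ

theorem uniformPartition_cons_one_injective {n : ℕ} (hn : (m + 1) * N ≤ n) :
    Function.Injective fun F : Fin m → Equiv.Perm (Fin N) =>
      uniformPartition_s13 n (Fin.cons 1 F : Fin (m + 1) → Equiv.Perm (Fin N)) := by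
  intro F G hFG
  funext j
  ext c
  have hmem (z : Fin ((m + 1) * N)) : (z : ℕ) + 1 ∈ Icc 1 n := by
    have := z.isLt
    simp only [mem_Icc]
    omega
  have hF : SameBlock (uniformPartition_s13 n (Fin.cons 1 F : Fin (m + 1) → Equiv.Perm (Fin N)))
      (finProdFinEquiv ((0 : Fin (m + 1)), c) + 1) (finProdFinEquiv (j.succ, F j c) + 1) := by
    refine (sameBlock_fiberPartition _ _ _).2 ⟨hmem _, hmem _, ?_⟩
    simp only [uniformLabel_finProdFinEquiv, Fin.cons_zero, Fin.cons_succ, Equiv.Perm.one_def,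
      Equiv.refl_symm, Equiv.refl_apply, Equiv.symm_apply_apply]
  simp only at hFG
  rw [hFG] at hF
  obtain ⟨-, -, hG⟩ := (sameBlock_fiberPartition _ _ _).1 hF
  simp only [uniformLabel_finProdFinEquiv, Fin.cons_zero, Fin.cons_succ, Equiv.Perm.one_def,
    Equiv.refl_symm, Equiv.refl_apply, Sum.inl.injEq] at hG
  rw [(Equiv.symm_apply_eq _).1 hG.symm]

theorem factorial_pow_le_A {n k : ℕ} (hn : (m + 1) * N ≤ n) (Q : Finpartition (Icc 1 k))
    (hQ : m < #(adjacentSameBlock Q)) : N.factorial ^ m ≤ A n Q := by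
  have := Nat.card_le_card_of_injective
    (fun F : Fin m → Equiv.Perm (Fin N) => (⟨_, uniformPartition_not_setPartContains_s13 _ Q hQ⟩ :
      {σ : Finpartition (Icc 1 n) // ¬ SetPartContains σ Q}))
    fun _ _ h => uniformPartition_cons_one_injective hn (Subtype.mk.inj h)
  simpa [A, Nat.card_fun, Fintype.card_perm] using this

end UniformPartition

theorem succ_pow_succ_le_factorial (N : ℕ) :
    ((N : ℝ) + 1) ^ (N + 1) ≤ (2 * Real.exp 1) ^ (N + 1) * N.factorial := by
  have hexp := Real.pow_div_factorial_le_exp (x := (N : ℝ) + 1) (by positivity) (N + 1)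
  rw [div_le_iff₀ (by positivity), Nat.factorial_succ, Nat.cast_mul] at hexp
  have htwo : ((N + 1 : ℕ) : ℝ) ≤ 2 ^ (N + 1) := by exact_mod_cast Nat.lt_two_pow_self.le
  calc ((N : ℝ) + 1) ^ (N + 1)
      ≤ Real.exp ((N : ℝ) + 1) * (((N + 1 : ℕ) : ℝ) * N.factorial) := hexp
    _ ≤ Real.exp 1 ^ (N + 1) * (2 ^ (N + 1) * N.factorial) := by
      rw [Real.exp_one_pow]
      push_cast
      gcongr
      exact_mod_cast htwo
    _ = (2 * Real.exp 1) ^ (N + 1) * N.factorial := by ring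

theorem rpow_le_pow_of_le_mul_succ {m n N : ℕ} (hn : n ≤ (m + 1) * (N + 1)) :
    (n : ℝ) ^ ((n : ℝ) * (1 - 1 / ((m : ℝ) + 1))) ≤ (((m : ℝ) + 1) * (N + 1)) ^ ((N + 1) * m) := by
  have hm₁ : (1 : ℝ) ≤ m + 1 := le_add_of_nonneg_left m.cast_nonneg
  have hN₁ : (1 : ℝ) ≤ N + 1 := le_add_of_nonneg_left N.cast_nonneg
  have hnX : (n : ℝ) ≤ ((m : ℝ) + 1) * (N + 1) := by exact_mod_cast hn
  have hexp₀ : 0 ≤ (n : ℝ) * (1 - 1 / ((m : ℝ) + 1)) :=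
    mul_nonneg n.cast_nonneg (sub_nonneg.2 (div_le_one_of_le₀ hm₁ (by positivity)))
  have hexp : (n : ℝ) * (1 - 1 / ((m : ℝ) + 1)) ≤ (((N + 1) * m : ℕ) : ℝ) := by
    rw [show (1 : ℝ) - 1 / ((m : ℝ) + 1) = m / ((m : ℝ) + 1) by field_simp; ring, mul_div_assoc',
      div_le_iff₀ (by positivity)]
    push_cast
    nlinarith [m.cast_nonneg (α := ℝ)]
  calc (n : ℝ) ^ ((n : ℝ) * (1 - 1 / ((m : ℝ) + 1)))
      ≤ (((m : ℝ) + 1) * (N + 1)) ^ ((n : ℝ) * (1 - 1 / ((m : ℝ) + 1))) :=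
        Real.rpow_le_rpow n.cast_nonneg hnX hexp₀
    _ ≤ (((m : ℝ) + 1) * (N + 1)) ^ (((N + 1) * m : ℕ) : ℝ) :=
        Real.rpow_le_rpow_of_exponent_le (one_le_mul_of_one_le_of_one_le hm₁ hN₁) hexp
    _ = (((m : ℝ) + 1) * (N + 1)) ^ ((N + 1) * m) := Real.rpow_natCast _ _

theorem exists_pow_mul_rpow_le_factorial_pow (m : ℕ) :
    ∃ c : ℝ, 0 < c ∧ ∀ n : ℕ, 0 < n →
      c ^ n * (n : ℝ) ^ ((n : ℝ) * (1 - 1 / ((m : ℝ) + 1))) ≤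
        ((n / (m + 1)).factorial : ℝ) ^ m := by
  obtain ⟨D, hD_eq⟩ : ∃ D : ℝ, D = 2 * Real.exp 1 * (m + 1) := ⟨_, rfl⟩
  have hD : 1 ≤ D := by
    rw [hD_eq]
    nlinarith [Real.add_one_le_exp 1, m.cast_nonneg (α := ℝ)]
  refine ⟨(D ^ (m + 2))⁻¹, by positivity, fun n hn => ?_⟩
  set N := n / (m + 1)
  have hnN : n ≤ (m + 1) * (N + 1) := (Nat.lt_mul_div_succ n m.succ_pos).le
  have hexp : (N + 1) * m ≤ (m + 2) * n := by
    have : N * (m + 1) ≤ n := Nat.div_mul_le_self n (m + 1)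
    nlinarith
  have hfac : (((m : ℝ) + 1) * (N + 1)) ^ (N + 1) ≤ D ^ (N + 1) * N.factorial := by
    calc (((m : ℝ) + 1) * (N + 1)) ^ (N + 1)
        ≤ ((m : ℝ) + 1) ^ (N + 1) * ((2 * Real.exp 1) ^ (N + 1) * N.factorial) := by
          rw [mul_pow]
          gcongr
          exact succ_pow_succ_le_factorial N
      _ = D ^ (N + 1) * N.factorial := by rw [hD_eq, mul_pow, mul_pow]; ring
  calc (D ^ (m + 2))⁻¹ ^ n * (n : ℝ) ^ ((n : ℝ) * (1 - 1 / ((m : ℝ) + 1)))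
      ≤ (D ^ (m + 2))⁻¹ ^ n * ((((m : ℝ) + 1) * (N + 1)) ^ (N + 1)) ^ m := by
        rw [← pow_mul]
        gcongr
        exact rpow_le_pow_of_le_mul_succ hnN
    _ ≤ (D ^ (m + 2))⁻¹ ^ n * (D ^ (N + 1) * N.factorial) ^ m := by gcongr
    _ = D ^ ((N + 1) * m) / D ^ ((m + 2) * n) * (N.factorial : ℝ) ^ m := by
        rw [mul_pow, ← pow_mul, inv_pow, ← pow_mul, div_eq_mul_inv]
        ring
    _ ≤ (N.factorial : ℝ) ^ m := by
        refine mul_le_of_le_one_left (by positivity) ?_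
        rw [div_le_one (by positivity)]
        exact pow_le_pow_right₀ hD hexp

theorem general_lower_bound_general (k k' r' : ℕ) (hrk' : r' < k')
    (τ : Finpartition (Finset.Icc 1 k)) (Q : Finpartition (Finset.Icc 1 k'))
    (hcont : SetPartContains τ Q)
    (hQ : ((Finset.Icc 1 (k' - 1)).filter fun i => ¬ SameBlock Q i (i + 1)).card < r') :
    ∃ c : ℝ, 0 < c ∧ ∀ n : ℕ, 0 < n →
      c ^ n * (n : ℝ) ^ ((n : ℝ) * (1 - 1 / ((k' : ℝ) - r'))) ≤ (A n τ : ℝ) := by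
  obtain ⟨m, hm⟩ : ∃ m, k' - r' = m + 1 := ⟨k' - r' - 1, by omega⟩
  have hcast : (k' : ℝ) - r' = (m : ℝ) + 1 := by
    rw [← Nat.cast_sub hrk'.le, hm, Nat.cast_succ]
  have hadj : m < #(adjacentSameBlock Q) := by
    have hsplit := card_filter_add_card_filter_not (s := Icc 1 (k' - 1))
      (p := fun i => SameBlock Q i (i + 1))
    rw [Nat.card_Icc] at hsplit
    rw [adjacentSameBlock]
    omega
  obtain ⟨c, hc, hbound⟩ := exists_pow_mul_rpow_le_factorial_pow m
  refine ⟨c, hc, fun n hn => ?_⟩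
  have hcount : (n / (m + 1)).factorial ^ m ≤ A n τ :=
    (factorial_pow_le_A (Nat.mul_div_le n (m + 1)) Q hadj).trans (A_le_A_of_setPartContains hcont)
  rw [hcast]
  exact (hbound n hn).trans (by exact_mod_cast hcount)

/-- If a set partition `τ` of `[k]` contains a set partition `P` of `[k']`
with fewer than `r'` indices `1 ≤ i ≤ k' - 1` having `i` and `i+1` in different blocks
(where `1 ≤ r' < k'`), then there is `c > 0` with `A_n(τ) ≥ c^n · n^(n(1 - 1/(k'-r')))`
for all `n ≥ 1`. -/
theorem general_lower_bound (k k' r' : ℕ) (hr' : 0 < r') (hrk' : r' < k')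
    (τ : Finpartition (Finset.Icc 1 k)) (Q : Finpartition (Finset.Icc 1 k'))
    (hcont : SetPartContains τ Q)
    (hQ : ((Finset.Icc 1 (k' - 1)).filter fun i => ¬ SameBlock Q i (i + 1)).card < r') :
    ∃ c : ℝ, 0 < c ∧ ∀ n : ℕ, 0 < n →
      c ^ n * (n : ℝ) ^ ((n : ℝ) * (1 - 1 / ((k' : ℝ) - r'))) ≤ (A n τ : ℝ) :=
  general_lower_bound_general k k' r' hrk' τ Q hcont hQ
end

section
/- Let τ be a set partition of [k] that avoids both the set partition 123 of [3] (a single block of size 3) and the set partition 12/34 of [4] (blocks {1,2} and {3,4}). Then every block of τ has size at most 2, and there exists an integer t with 0 ≤ t ≤ k such that every block {a, b} of τ of size 2 with a < b satisfies a ≤ t < b. -/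
/-!
A block with three elements `a < b < c` is a copy of `123`. Two pair blocks `{a, b}` and
`{c, d}` with `b < c` form a copy of `12/34`, and distinct blocks cannot share an endpoint,
so any two pair blocks cross or nest. Hence the largest smaller endpoint `t` of a pair block
lies below the larger endpoint of every pair block.
-/

theorem SameBlock.iff_mem {n : ℕ} {P : Finpartition (Finset.Icc 1 n)} {B : Finset ℕ}
    (hB : B ∈ P.parts) {i : ℕ} (hi : i ∈ B) (j : ℕ) : SameBlock P i j ↔ j ∈ B := by
  constructor
  · rintro ⟨C, hC, hiC, hjC⟩
    rwa [P.eq_of_mem_parts hB hC hi hiC]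
  · exact fun hj => ⟨B, hB, hi, hj⟩

theorem setPartContains_of_forall_parts {n k : ℕ} {σ : Finpartition (Finset.Icc 1 n)}
    {τ : Finpartition (Finset.Icc 1 k)} (f : ℕ → ℕ)
    (hmaps : Set.MapsTo f (Finset.Icc 1 k) (Finset.Icc 1 n))
    (hmono : StrictMonoOn f (Finset.Icc 1 k))
    (hparts : ∀ C ∈ τ.parts, ∃ D ∈ σ.parts, ∀ j ∈ Finset.Icc 1 k, j ∈ C ↔ f j ∈ D) :
    SetPartContains σ τ := by
  refine ⟨f, fun i hi => hmaps hi, fun i hi j hj => hmono hi hj, fun i hi j hj => ?_⟩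
  obtain ⟨C, hC, hiC⟩ := τ.exists_mem hi
  obtain ⟨D, hD, hCD⟩ := hparts C hC
  rw [SameBlock.iff_mem hC hiC, SameBlock.iff_mem hD ((hCD i hi).1 hiC), hCD j hj]

def partition123 : Finpartition (Finset.Icc 1 3) :=
  Finpartition.indiscrete (by decide)

def partition12_34 : Finpartition (Finset.Icc 1 4) where
  parts := {{1, 2}, {3, 4}}
  supIndep := by decide
  sup_parts := by decide
  bot_notMem := by decide

theorem setPartContains_123_of_two_lt_card {k : ℕ} {τ : Finpartition (Finset.Icc 1 k)}
    {B : Finset ℕ} (hB : B ∈ τ.parts) (hcard : 2 < B.card) {p : Finpartition (Finset.Icc 1 3)}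
    (hp : p.parts = {Finset.Icc 1 3}) : SetPartContains τ p := by
  let e := B.orderEmbOfFin rfl
  let f : ℕ → ℕ := fun i =>
    if i = 1 then e ⟨0, by omega⟩ else if i = 2 then e ⟨1, by omega⟩ else e ⟨2, hcard⟩
  have hfB : ∀ i, f i ∈ B := fun i => by
    simp only [f]; split_ifs <;> exact B.orderEmbOfFin_mem rfl _
  refine setPartContains_of_forall_parts f (fun i _ => τ.le hB (hfB i)) ?_ ?_
  · intro i hi j hj hij
    simp only [Finset.coe_Icc, Set.mem_Icc] at hi hj
    simp only [f]
    split_ifs <;> first | omega | exact e.strictMono (Fin.mk_lt_mk.2 (by omega))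
  · intro C hC
    rw [hp, Finset.mem_singleton] at hC
    exact ⟨B, hB, fun j hj => by simp [hC ▸ hj, hfB]⟩

theorem setPartContains_12_34_of_mem_parts {k : ℕ} {τ : Finpartition (Finset.Icc 1 k)}
    {a b c d : ℕ} (hab : a < b) (hbc : b < c) (hcd : c < d)
    (hB : {a, b} ∈ τ.parts) (hD : {c, d} ∈ τ.parts) {p : Finpartition (Finset.Icc 1 4)}
    (hp : p.parts = {{1, 2}, {3, 4}}) : SetPartContains τ p := by
  let f : ℕ → ℕ := fun i => if i = 1 then a else if i = 2 then b else if i = 3 then c else d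
  have hf : ∀ i, f i ∈ ({a, b} : Finset ℕ) ∨ f i ∈ ({c, d} : Finset ℕ) := fun i => by
    simp only [f]; split_ifs <;> simp
  refine setPartContains_of_forall_parts f
    (fun i _ => (hf i).elim (fun h => τ.le hB h) (fun h => τ.le hD h)) ?_ ?_
  · intro i hi j hj hij
    simp only [Finset.coe_Icc, Set.mem_Icc] at hi hj
    simp only [f]
    split_ifs <;> omega
  · intro C hC
    have hpre : ∀ j ∈ Finset.Icc 1 4, (j ∈ ({1, 2} : Finset ℕ) ↔ f j ∈ ({a, b} : Finset ℕ)) ∧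
        (j ∈ ({3, 4} : Finset ℕ) ↔ f j ∈ ({c, d} : Finset ℕ)) := by
      intro j hj
      simp only [Finset.mem_Icc] at hj
      simp only [f, Finset.mem_insert, Finset.mem_singleton]
      split_ifs <;> omega
    rw [hp, Finset.mem_insert, Finset.mem_singleton] at hC
    rcases hC with rfl | rfl
    exacts [⟨_, hB, fun j hj => (hpre j hj).1⟩, ⟨_, hD, fun j hj => (hpre j hj).2⟩]

theorem lt_of_pair_mem_parts_of_not_setPartContains_12_34 {k : ℕ}
    {τ : Finpartition (Finset.Icc 1 k)} (h : ¬ SetPartContains τ partition12_34)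
    {a b c d : ℕ} (hab : a < b) (hcd : c < d) (hB : {a, b} ∈ τ.parts)
    (hD : {c, d} ∈ τ.parts) : c < b := by
  by_contra! hbc
  rcases hbc.eq_or_lt with rfl | hbc
  · have hd : d ∈ ({a, b} : Finset ℕ) := by
      rw [τ.eq_of_mem_parts hB hD (Finset.mem_insert_of_mem (Finset.mem_singleton_self b))
        (Finset.mem_insert_self b {d})]
      simp
    simp only [Finset.mem_insert, Finset.mem_singleton] at hd
    omega
  · exact h (setPartContains_12_34_of_mem_parts hab hbc hcd hB hD rfl)

theorem exists_le_lt_of_pair_mem_parts {k : ℕ} (τ : Finpartition (Finset.Icc 1 k))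
    (hcross : ∀ a b c d : ℕ, a < b → c < d → {a, b} ∈ τ.parts → {c, d} ∈ τ.parts → c < b) :
    ∃ t ≤ k, ∀ a b : ℕ, a < b → ({a, b} : Finset ℕ) ∈ τ.parts → a ≤ t ∧ t < b := by
  classical
  let lefts := (Finset.Icc 1 k).filter fun a => ∃ b, a < b ∧ {a, b} ∈ τ.parts
  refine ⟨lefts.sup id, Finset.sup_le fun a ha => (Finset.mem_Icc.1 (Finset.mem_filter.1 ha).1).2,
    fun a b hab hB => ⟨?_, ?_⟩⟩
  · exact Finset.le_sup (f := id) (Finset.mem_filter.2 ⟨τ.le hB (by simp), b, hab, hB⟩)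
  · rw [Finset.sup_lt_iff (Nat.bot_eq_zero ▸ Nat.zero_lt_of_lt hab)]
    intro c hc
    obtain ⟨-, d, hcd, hD⟩ := Finset.mem_filter.1 hc
    exact hcross a b c d hab hcd hB hD

/-- If a set partition `τ` of `[k]` avoids both `123` (a single block of
size 3) and `12/34` (blocks `{1,2}` and `{3,4}`), then every block of `τ` has size at most 2,
and there is `0 ≤ t ≤ k` such that every size-2 block `{a, b}` with `a < b`
satisfies `a ≤ t < b`. -/
theorem avoider_structure (k : ℕ) (τ : Finpartition (Finset.Icc 1 k))
    (h3 : ∀ p : Finpartition (Finset.Icc 1 3), p.parts = {Finset.Icc 1 3} →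
      ¬ SetPartContains τ p)
    (h4 : ∀ p : Finpartition (Finset.Icc 1 4),
      p.parts = ({({1, 2} : Finset ℕ), ({3, 4} : Finset ℕ)} : Finset (Finset ℕ)) →
      ¬ SetPartContains τ p) :
    (∀ B ∈ τ.parts, B.card ≤ 2) ∧
      ∃ t : ℕ, t ≤ k ∧ ∀ a b : ℕ, a < b → ({a, b} : Finset ℕ) ∈ τ.parts → a ≤ t ∧ t < b := by
  refine ⟨fun B hB => ?_, exists_le_lt_of_pair_mem_parts τ fun a b c d hab hcd hB hD =>
    lt_of_pair_mem_parts_of_not_setPartContains_12_34 (h4 partition12_34 rfl) hab hcd hB hD⟩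
  by_contra! hcard
  exact h3 partition123 rfl (setPartContains_123_of_two_lt_card hB hcard rfl)
end
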